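/- arXiv:1101.2145 — 5 statements merged into one kernel-verified Lean document; each statement's English description precedes it below -/
import Mathlib

section
/- Abstract propagation estimate on a Krein space (Proposition D.1(1)). Let C(t), C1(t), C2(t), B(t), B_1(t), ..., B_N(t) be strongly continuous families of bounded operators on H for t ≥ 0, let 0 ≤ δ0 < 1 and c_1, ..., c_N ≥ 0, and assume: (a) for every u ∈ H the function f_u(t) := [P u_t, Φ(t) P u_t] is differentiable on [0,∞) with f_u'(t) = ⟨P u_t, C(t) P u_t⟩ + ⟨P u_t, C1(t) P u_t⟩ + ⟨P u_t, C2(t) P u_t⟩; (b) each C(t) is selfadjoint on the Hilbert space H and ⟨w, C(t) w⟩ ≥ ‖B(t) w‖² for all w ∈ H; (c) |⟨w, C1(t) w⟩| ≤ Σ_{1≤j,k≤N} ‖B_j(t) w‖ · ‖B_k(t) w‖ for all w ∈ H; (d) ∫_0^∞ ‖B_j(t) P u_t‖² dt ≤ c_j ‖u‖² for every u ∈ H and every j; (e) |⟨w, C2(t) w⟩| ≤ δ0 ‖B(t) w‖² for all w ∈ H. Then there is a constant C' > 0 such that ∫_0^∞ ‖B(t) P u_t‖² dt ≤ C' ‖u‖²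 for all u ∈ H. -/
/-!
The real part of `f(t) = [P u_t, Φ(t) P u_t]` is bounded by a multiple of `‖u‖²`, because `Φ` and
`t ↦ U(t) P` are bounded on `[0, ∞)`. By (b), (c), (e) and Cauchy–Schwarz its derivative is at least
`(1 - δ₀) ‖B(t) P u_t‖² - N ∑ⱼ ‖Bⱼ(t) P u_t‖²`. Integrating over `[0, n]` and using (d) bounds
`(1 - δ₀) ∫₀ⁿ ‖B(t) P u_t‖² dt` by a multiple of `‖u‖²` uniformly in `n`, and monotone convergence
lets `n → ∞`.
-/

open MeasureTheory Set Filter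
open scoped ComplexInnerProductSpace Topology

section StrongContinuity

variable {X 𝕜 E F : Type*} [TopologicalSpace X] [NontriviallyNormedField 𝕜]
  [NormedAddCommGroup E] [NormedSpace 𝕜 E] [CompleteSpace E]
  [NormedAddCommGroup F] [NormedSpace 𝕜 F]
  {T : X → E →L[𝕜] F} {s : Set X}

theorem exists_eventually_opNorm_le_of_continuousOn_apply [LocallyCompactSpace X]
    (hs : IsClosed s) (hT : ∀ v, ContinuousOn (fun x => T x v) s) (x : X) :
    ∃ C, ∀ᶠ y in 𝓝[s] x, ‖T y‖ ≤ C := by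
  obtain ⟨k, hk, hkx⟩ := exists_compact_mem_nhds x
  have hks : IsCompact (s ∩ k) := hk.inter_left hs
  have hbdd : ∀ v, ∃ Cv, ∀ y : ↥(s ∩ k), ‖T y v‖ ≤ Cv := fun v =>
    (hks.exists_bound_of_continuousOn ((hT v).mono inter_subset_left)).imp
      fun _ h y => h y y.2
  obtain ⟨C, hC⟩ := banach_steinhaus hbdd
  exact ⟨C, Filter.mem_of_superset (inter_mem_nhdsWithin s hkx) fun y hy => hC ⟨y, hy⟩⟩

theorem ContinuousOn.clm_apply_of_continuousOn_apply [LocallyCompactSpace X]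
    (hs : IsClosed s) (hT : ∀ v, ContinuousOn (fun x => T x v) s) {w : X → E}
    (hw : ContinuousOn w s) : ContinuousOn (fun x => T x (w x)) s := by
  intro x hx
  obtain ⟨C, hC⟩ := exists_eventually_opNorm_le_of_continuousOn_apply hs hT x
  rw [ContinuousWithinAt, tendsto_iff_norm_sub_tendsto_zero]
  refine squeeze_zero' (Eventually.of_forall fun _ => norm_nonneg _) ?_
    (g := fun y => C * ‖w y - w x‖ + ‖T y (w x) - T x (w x)‖) ?_
  · filter_upwards [hC] with y hy
    calc ‖T y (w y) - T x (w x)‖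
        ≤ ‖T y (w y - w x)‖ + ‖T y (w x) - T x (w x)‖ := by
          rw [map_sub]; exact norm_sub_le_norm_sub_add_norm_sub _ _ _
      _ ≤ C * ‖w y - w x‖ + ‖T y (w x) - T x (w x)‖ := by
          gcongr; exact (T y).le_of_opNorm_le hy _
  · have h₁ := ((tendsto_iff_norm_sub_tendsto_zero.mp (hw x hx)).const_mul C)
    have h₂ := tendsto_iff_norm_sub_tendsto_zero.mp (hT (w x) x hx)
    simpa using h₁.add h₂

end StrongContinuity

theorem integral_Ioc_le_of_hasDerivWithinAt_of_le {g q G G' : ℝ → ℝ} {δ M Q b : ℝ}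
    (hδ : δ < 1) (hb : 0 ≤ b) (hg : IntegrableOn g (Icc 0 b)) (hq : IntegrableOn q (Icc 0 b))
    (hG : ∀ t ∈ Ici (0 : ℝ), HasDerivWithinAt G (G' t) (Ici 0) t)
    (hGM : ∀ t ∈ Ici (0 : ℝ), |G t| ≤ M)
    (hgq : ∀ t ∈ Ici (0 : ℝ), (1 - δ) * g t - q t ≤ G' t)
    (hqQ : ∫ t in Ioc 0 b, q t ≤ Q) :
    ∫ t in Ioc 0 b, g t ≤ (2 * M + Q) / (1 - δ) := by
  have hFTC : ∫ t in (0)..b, ((1 - δ) * g t - q t) ≤ G b - G 0 :=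
    intervalIntegral.integral_le_sub_of_hasDeriv_right_of_le hb
      (fun t ht => (hG t ht.1).continuousWithinAt.mono Icc_subset_Ici_self)
      (fun t ht => (hG t ht.1.le).mono (Ioi_subset_Ici ht.1.le))
      ((hg.const_mul _).sub hq) (fun t ht => hgq t ht.1.le)
  rw [intervalIntegral.integral_of_le hb,
    integral_sub ((hg.mono_set Ioc_subset_Icc_self).const_mul _)
      (hq.mono_set Ioc_subset_Icc_self), integral_const_mul] at hFTC
  rw [le_div_iff₀ (sub_pos.mpr hδ)]
  linarith [abs_le.mp (hGM b hb), abs_le.mp (hGM 0 self_mem_Ici)]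

theorem integral_Ioc_le_of_lintegral_Ioi_le {f : ℝ → ℝ} {a b c : ℝ} (hf : ∀ t, 0 ≤ f t)
    (hfi : IntegrableOn f (Ioc a b)) (hc : 0 ≤ c)
    (h : ∫⁻ t in Ioi a, ENNReal.ofReal (f t) ≤ ENNReal.ofReal c) :
    ∫ t in Ioc a b, f t ≤ c := by
  rw [← ENNReal.ofReal_le_ofReal_iff hc,
    ofReal_integral_eq_lintegral_ofReal hfi (Eventually.of_forall hf)]
  exact (lintegral_mono_set Ioc_subset_Ioi_self).trans h

theorem lintegral_Ioi_le_of_integral_Ioc_le {f : ℝ → ℝ} {a c : ℝ} (hf : ∀ t, 0 ≤ f t)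
    (hfi : ∀ n : ℕ, IntegrableOn f (Ioc a n)) (h : ∀ n : ℕ, ∫ t in Ioc a n, f t ≤ c) :
    ∫⁻ t in Ioi a, ENNReal.ofReal (f t) ≤ ENNReal.ofReal c := by
  have hIoi : ⋃ n : ℕ, Ioc a n = Ioi a :=
    iUnion_Ioc_eq_Ioi_self_iff.mpr fun t _ => exists_nat_ge t
  rw [← hIoi, setLIntegral_iUnion_of_directed _
    (Monotone.directed_le fun m n hmn => Ioc_subset_Ioc_right (Nat.cast_le.mpr hmn))]
  refine iSup_le fun n => ?_
  rw [← ofReal_integral_eq_lintegral_ofReal (hfi n) (Eventually.of_forall hf)]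
  exact ENNReal.ofReal_le_ofReal (h n)

theorem sum_sum_mul_le_card_mul_sum_sq {ι : Type*} [Fintype ι] (a : ι → ℝ) :
    ∑ j, ∑ k, a j * a k ≤ Fintype.card ι * ∑ j, a j ^ 2 := by
  rw [← Finset.sum_mul_sum, ← sq]
  exact sq_sum_le_card_mul_sum_sq

section InnerProductSpace

variable {H : Type*} [NormedAddCommGroup H] [InnerProductSpace ℂ H]

theorem norm_inner_apply_apply_le {A T : H →L[ℂ] H} {v : H} {a r : ℝ} (hT : ‖T‖ ≤ a)
    (hv : ‖v‖ ≤ r) : ‖⟪v, A (T v)⟫‖ ≤ ‖A‖ * a * r ^ 2 := by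
  have ha : 0 ≤ a := (norm_nonneg _).trans hT
  have hr : 0 ≤ r := (norm_nonneg _).trans hv
  calc ‖⟪v, A (T v)⟫‖ ≤ ‖v‖ * (‖A‖ * (‖T‖ * ‖v‖)) := by
        refine (norm_inner_le_norm _ _).trans ?_
        gcongr
        exact (A.le_opNorm _).trans (by gcongr; exact T.le_opNorm _)
    _ ≤ r * (‖A‖ * (a * r)) := by gcongr
    _ = ‖A‖ * a * r ^ 2 := by ring

theorem sub_le_re_inner_add_inner_add_inner {N : ℕ} {C C1 C2 B : H →L[ℂ] H}
    {B' : Fin N → H →L[ℂ] H} {δ : ℝ} {v : H} (hC : ‖B v‖ ^ 2 ≤ (⟪v, C v⟫).re)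
    (hC1 : ‖⟪v, C1 v⟫‖ ≤ ∑ j, ∑ k, ‖B' j v‖ * ‖B' k v‖)
    (hC2 : ‖⟪v, C2 v⟫‖ ≤ δ * ‖B v‖ ^ 2) :
    (1 - δ) * ‖B v‖ ^ 2 - N * ∑ j, ‖B' j v‖ ^ 2 ≤ (⟪v, C v⟫ + ⟪v, C1 v⟫ + ⟪v, C2 v⟫).re := by
  have hCS := sum_sum_mul_le_card_mul_sum_sq fun j => ‖B' j v‖
  rw [Fintype.card_fin] at hCS
  rw [Complex.add_re, Complex.add_re]
  linarith [abs_le.mp ((Complex.abs_re_le_norm ⟪v, C1 v⟫).trans hC1),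
    abs_le.mp ((Complex.abs_re_le_norm ⟪v, C2 v⟫).trans hC2)]

variable [CompleteSpace H]

theorem lintegral_norm_sq_le_of_hasDerivWithinAt_inner {N : ℕ} {C C1 C2 B : ℝ → H →L[ℂ] H}
    {B' : Fin N → ℝ → H →L[ℂ] H} {w : ℝ → H} {F : ℝ → ℂ} {δ M : ℝ} {c : Fin N → ℝ}
    (hw : ContinuousOn w (Ici 0))
    (hB : ∀ v, ContinuousOn (fun t => B t v) (Ici 0))
    (hB' : ∀ j v, ContinuousOn (fun t => B' j t v) (Ici 0))
    (hδ : δ < 1) (hc : ∀ j, 0 ≤ c j)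
    (hF : ∀ t ∈ Ici (0 : ℝ), HasDerivWithinAt F
      (⟪w t, C t (w t)⟫ + ⟪w t, C1 t (w t)⟫ + ⟪w t, C2 t (w t)⟫) (Ici 0) t)
    (hFM : ∀ t ∈ Ici (0 : ℝ), ‖F t‖ ≤ M)
    (hC : ∀ t ∈ Ici (0 : ℝ), ∀ v, ‖B t v‖ ^ 2 ≤ (⟪v, C t v⟫).re)
    (hC1 : ∀ t ∈ Ici (0 : ℝ), ∀ v, ‖⟪v, C1 t v⟫‖ ≤ ∑ j, ∑ k, ‖B' j t v‖ * ‖B' k t v‖)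
    (hC2 : ∀ t ∈ Ici (0 : ℝ), ∀ v, ‖⟪v, C2 t v⟫‖ ≤ δ * ‖B t v‖ ^ 2)
    (hB'w : ∀ j, ∫⁻ t in Ioi 0, ENNReal.ofReal (‖B' j t (w t)‖ ^ 2) ≤ ENNReal.ofReal (c j)) :
    ∫⁻ t in Ioi 0, ENNReal.ofReal (‖B t (w t)‖ ^ 2)
      ≤ ENNReal.ofReal ((2 * M + N * ∑ j, c j) / (1 - δ)) := by
  have hint : ∀ {f : ℝ → ℝ}, ContinuousOn f (Ici 0) → ∀ b, IntegrableOn f (Icc 0 b) :=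
    fun hf _ => (hf.mono Icc_subset_Ici_self).integrableOn_Icc
  have hg : ContinuousOn (fun t => ‖B t (w t)‖ ^ 2) (Ici 0) :=
    (hw.clm_apply_of_continuousOn_apply isClosed_Ici hB).norm.pow 2
  have hb : ∀ j, ContinuousOn (fun t => ‖B' j t (w t)‖ ^ 2) (Ici 0) := fun j =>
    (hw.clm_apply_of_continuousOn_apply isClosed_Ici (hB' j)).norm.pow 2
  refine lintegral_Ioi_le_of_integral_Ioc_le (fun _ => sq_nonneg _)
    (fun n => (hint hg n).mono_set Ioc_subset_Icc_self) fun n => ?_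
  have hq : ∫ t in Ioc 0 (n : ℝ), (N : ℝ) * ∑ j, ‖B' j t (w t)‖ ^ 2 ≤ N * ∑ j, c j := by
    rw [integral_const_mul, integral_finsetSum _
      fun j _ => (hint (hb j) n).mono_set Ioc_subset_Icc_self]
    gcongr with j
    exact integral_Ioc_le_of_lintegral_Ioi_le (fun _ => sq_nonneg _)
      ((hint (hb j) n).mono_set Ioc_subset_Icc_self) (hc j) (hB'w j)
  exact integral_Ioc_le_of_hasDerivWithinAt_of_le hδ n.cast_nonneg (hint hg n)
    (hint (continuousOn_const.mul (continuousOn_finsetSum _ fun j _ => hb j)) n)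
    (fun t ht => Complex.reCLM.hasFDerivAt.comp_hasDerivWithinAt t (hF t ht))
    (fun t ht => (Complex.abs_re_le_norm _).trans (hFM t ht))
    (fun t ht => sub_le_re_inner_add_inner_add_inner (hC t ht _) (hC1 t ht _) (hC2 t ht _)) hq

end InnerProductSpace

theorem abstract_propagation_estimate_general
    {H : Type*} [NormedAddCommGroup H] [InnerProductSpace ℂ H] [CompleteSpace H]
    (K : H →L[ℂ] H)
    (U : ℝ → H →L[ℂ] H)
    (hUcont : ∀ u : H, Continuous fun t : ℝ => U t u)
    (P : H →L[ℂ] H) (hPU : ∀ t : ℝ, P.comp (U t) = (U t).comp P)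
    (hUPbdd : ∃ Cb : ℝ, ∀ t : ℝ, 0 ≤ t → ‖(U t).comp P‖ ≤ Cb)
    (Φ : ℝ → H →L[ℂ] H)
    (hΦbdd : ∃ CΦ : ℝ, ∀ t : ℝ, 0 ≤ t → ‖Φ t‖ ≤ CΦ)
    (N : ℕ) (C C1 C2 B : ℝ → H →L[ℂ] H) (B' : Fin N → ℝ → H →L[ℂ] H)
    (hBcont : ∀ u : H, ContinuousOn (fun t : ℝ => B t u) (Ici 0))
    (hB'cont : ∀ (j : Fin N) (u : H), ContinuousOn (fun t : ℝ => B' j t u) (Ici 0))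
    (δ0 : ℝ) (hδ1 : δ0 < 1)
    (c : Fin N → ℝ) (hc : ∀ j, 0 ≤ c j)
    -- (a) the Heisenberg derivative identity
    (ha : ∀ u : H, ∀ t ∈ Ici (0:ℝ),
      HasDerivWithinAt
        (fun s : ℝ => ⟪P (U s u), ((1 : H →L[ℂ] H) + K) (Φ s (P (U s u)))⟫)
        (⟪P (U t u), C t (P (U t u))⟫ + ⟪P (U t u), C1 t (P (U t u))⟫
          + ⟪P (U t u), C2 t (P (U t u))⟫)
        (Ici 0) t)
    -- (b) selfadjointness and positivity of C(t)
    (hb : ∀ t ∈ Ici (0:ℝ), IsSelfAdjoint (C t) ∧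
      ∀ w : H, ‖B t w‖ ^ 2 ≤ (⟪w, C t w⟫).re)
    -- (c) bound on C1(t)
    (hc1 : ∀ t ∈ Ici (0:ℝ), ∀ w : H,
      ‖⟪w, C1 t w⟫‖ ≤ ∑ j : Fin N, ∑ k : Fin N, ‖B' j t w‖ * ‖B' k t w‖)
    -- (d) integral propagation estimates for the B_j
    (hd : ∀ (u : H) (j : Fin N),
      ∫⁻ t in Ioi (0:ℝ), ENNReal.ofReal (‖B' j t (P (U t u))‖ ^ 2)
        ≤ ENNReal.ofReal (c j * ‖u‖ ^ 2))
    -- (e) bound on C2(t)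
    (he : ∀ t ∈ Ici (0:ℝ), ∀ w : H, ‖⟪w, C2 t w⟫‖ ≤ δ0 * ‖B t w‖ ^ 2) :
    ∃ C' : ℝ, 0 < C' ∧ ∀ u : H,
      ∫⁻ t in Ioi (0:ℝ), ENNReal.ofReal (‖B t (P (U t u))‖ ^ 2)
        ≤ ENNReal.ofReal (C' * ‖u‖ ^ 2) := by
  obtain ⟨Cb, hCb⟩ := hUPbdd
  obtain ⟨CΦ, hCΦ⟩ := hΦbdd
  set A := (2 * (‖(1 : H →L[ℂ] H) + K‖ * CΦ * Cb ^ 2) + N * ∑ j, c j) / (1 - δ0)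
  refine ⟨max A 1, lt_max_of_lt_right one_pos, fun u => ?_⟩
  have horbit : ∀ t ∈ Ici (0 : ℝ), ‖P (U t u)‖ ≤ Cb * ‖u‖ := fun t ht => by
    rw [← ContinuousLinearMap.comp_apply, hPU]
    exact ((U t).comp P).le_of_opNorm_le (hCb t ht) u
  calc ∫⁻ t in Ioi (0:ℝ), ENNReal.ofReal (‖B t (P (U t u))‖ ^ 2)
      ≤ ENNReal.ofReal ((2 * (‖(1 : H →L[ℂ] H) + K‖ * CΦ * (Cb * ‖u‖) ^ 2)
          + N * ∑ j, c j * ‖u‖ ^ 2) / (1 - δ0)) :=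
        lintegral_norm_sq_le_of_hasDerivWithinAt_inner (P.continuous.comp (hUcont u)).continuousOn
          hBcont hB'cont hδ1 (fun j => mul_nonneg (hc j) (sq_nonneg _)) (ha u)
          (fun t ht => norm_inner_apply_apply_le (hCΦ t ht) (horbit t ht))
          (fun t ht => (hb t ht).2) hc1 he (hd u)
    _ = ENNReal.ofReal (A * ‖u‖ ^ 2) := by rw [← Finset.sum_mul]; congr 1; ring
    _ ≤ ENNReal.ofReal (max A 1 * ‖u‖ ^ 2) := by gcongr; exact le_max_left _ _

/-- **Abstract propagation estimate on a Krein space** (Proposition D.1(1)). -/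
theorem abstract_propagation_estimate
    {H : Type*} [NormedAddCommGroup H] [InnerProductSpace ℂ H] [CompleteSpace H]
    (K : H →L[ℂ] H) (hK : IsSelfAdjoint K)
    (hKunit : IsUnit ((1 : H →L[ℂ] H) + K))
    (U : ℝ → H →L[ℂ] H) (hU0 : U 0 = 1)
    (hUgrp : ∀ s t : ℝ, U (s + t) = (U s).comp (U t))
    (hUcont : ∀ u : H, Continuous fun t : ℝ => U t u)
    (hUkrein : ∀ (t : ℝ) (u v : H),
      ⟪U t u, ((1 : H →L[ℂ] H) + K) (U t v)⟫ = ⟪u, ((1 : H →L[ℂ] H) + K) v⟫)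
    (P : H →L[ℂ] H) (hPU : ∀ t : ℝ, P.comp (U t) = (U t).comp P)
    (hUPbdd : ∃ Cb : ℝ, ∀ t : ℝ, 0 ≤ t → ‖(U t).comp P‖ ≤ Cb)
    (Φ : ℝ → H →L[ℂ] H)
    (hΦcont : ∀ u : H, ContinuousOn (fun t : ℝ => Φ t u) (Ici 0))
    (hΦbdd : ∃ CΦ : ℝ, ∀ t : ℝ, 0 ≤ t → ‖Φ t‖ ≤ CΦ)
    (N : ℕ) (C C1 C2 B : ℝ → H →L[ℂ] H) (B' : Fin N → ℝ → H →L[ℂ] H)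
    (hCcont : ∀ u : H, ContinuousOn (fun t : ℝ => C t u) (Ici 0))
    (hC1cont : ∀ u : H, ContinuousOn (fun t : ℝ => C1 t u) (Ici 0))
    (hC2cont : ∀ u : H, ContinuousOn (fun t : ℝ => C2 t u) (Ici 0))
    (hBcont : ∀ u : H, ContinuousOn (fun t : ℝ => B t u) (Ici 0))
    (hB'cont : ∀ (j : Fin N) (u : H), ContinuousOn (fun t : ℝ => B' j t u) (Ici 0))
    (δ0 : ℝ) (hδ0 : 0 ≤ δ0) (hδ1 : δ0 < 1)
    (c : Fin N → ℝ) (hc : ∀ j, 0 ≤ c j)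
    -- (a) the Heisenberg derivative identity
    (ha : ∀ u : H, ∀ t ∈ Ici (0:ℝ),
      HasDerivWithinAt
        (fun s : ℝ => ⟪P (U s u), ((1 : H →L[ℂ] H) + K) (Φ s (P (U s u)))⟫)
        (⟪P (U t u), C t (P (U t u))⟫ + ⟪P (U t u), C1 t (P (U t u))⟫
          + ⟪P (U t u), C2 t (P (U t u))⟫)
        (Ici 0) t)
    -- (b) selfadjointness and positivity of C(t)
    (hb : ∀ t ∈ Ici (0:ℝ), IsSelfAdjoint (C t) ∧
      ∀ w : H, ‖B t w‖ ^ 2 ≤ (⟪w, C t w⟫).re)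
    -- (c) bound on C1(t)
    (hc1 : ∀ t ∈ Ici (0:ℝ), ∀ w : H,
      ‖⟪w, C1 t w⟫‖ ≤ ∑ j : Fin N, ∑ k : Fin N, ‖B' j t w‖ * ‖B' k t w‖)
    -- (d) integral propagation estimates for the B_j
    (hd : ∀ (u : H) (j : Fin N),
      ∫⁻ t in Ioi (0:ℝ), ENNReal.ofReal (‖B' j t (P (U t u))‖ ^ 2)
        ≤ ENNReal.ofReal (c j * ‖u‖ ^ 2))
    -- (e) bound on C2(t)
    (he : ∀ t ∈ Ici (0:ℝ), ∀ w : H, ‖⟪w, C2 t w⟫‖ ≤ δ0 * ‖B t w‖ ^ 2) :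
    ∃ C' : ℝ, 0 < C' ∧ ∀ u : H,
      ∫⁻ t in Ioi (0:ℝ), ENNReal.ofReal (‖B t (P (U t u))‖ ^ 2)
        ≤ ENNReal.ofReal (C' * ‖u‖ ^ 2) :=
  abstract_propagation_estimate_general K U hUcont P hPU hUPbdd Φ hΦbdd N C C1 C2 B B' hBcont
    hB'cont δ0 hδ1 c hc ha hb hc1 hd he
end

section
/- Propagation estimate with integrable remainders (Corollary D.2(1)). Let D(t), R0(t), B(t), B_1(t), ..., B_N(t) be strongly continuous families of bounded operators on H for t ≥ 0 and c_1, ..., c_N ≥ 0, and assume: (a) for every u ∈ H the function f_u(t) := [P u_t, Φ(t) P u_t] is differentiable on [0,∞) with f_u'(t) = [P u_t, D(t) P u_t] + [P u_t, R0(t) P u_t]; (b) t ↦ ‖R0(t)‖ and t ↦ ‖K D(t)‖ are integrable on [0,∞); (c) each D(t) is selfadjoint on the Hilbert space H and ⟨w, D(t) w⟩ ≥ ‖B(t) w‖² − Σ_{j=1}^{N} ‖B_j(t) w‖² for all w ∈ H; (d) ∫_0^∞ ‖B_j(t) P u_t‖² dt ≤ c_j ‖u‖² for every u ∈ H and every j.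 Then there is a constant C' > 0 such that ∫_0^∞ ‖B(t) P u_t‖² dt ≤ C' ‖u‖² for all u ∈ H. -/
open MeasureTheory Set Filter
open scoped ComplexInnerProductSpace Topology

/-!
For `w_t = P u_t`, the function `F t = Re [w_t, Φ(t) w_t]` is bounded by a multiple of `‖u‖²`.
Splitting `[w, D w] = ⟨w, D w⟩ + ⟨w, K D w⟩`, hypotheses (a) and (c) show that `F'` dominates
`‖B w_t‖² - Σⱼ ‖Bⱼ w_t‖²` up to the error `‖w_t‖² (‖K D(t)‖ + ‖1 + K‖ ‖R0(t)‖)`, integrable by (b).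
Integrating over `[0, T]` bounds `∫₀ᵀ ‖B w_t‖²` by `2 sup |F|`, the `Bⱼ`-integrals (d) and the
integrated error, uniformly in `T`.
-/

section StrongContinuity

variable {𝕜 E F : Type*} [NontriviallyNormedField 𝕜] [NormedAddCommGroup E] [NormedSpace 𝕜 E]
  [NormedAddCommGroup F] [NormedSpace 𝕜 F]

theorem Filter.Tendsto.clm_apply_of_eventually_norm_le {α : Type*} {l : Filter α}
    {A : α → E →L[𝕜] F} {A₀ : E →L[𝕜] F} {w : α → E} {w₀ : E} {M : ℝ}
    (hM : ∀ᶠ a in l, ‖A a‖ ≤ M) (hA : Tendsto (fun a => A a w₀) l (𝓝 (A₀ w₀)))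
    (hw : Tendsto w l (𝓝 w₀)) :
    Tendsto (fun a => A a (w a)) l (𝓝 (A₀ w₀)) := by
  have hsmall : Tendsto (fun a => A a (w a - w₀)) l (𝓝 0) := by
    refine squeeze_zero_norm' (hM.mono fun a ha => (A a).le_of_opNorm_le ha _) ?_
    simpa using (tendsto_sub_nhds_zero_iff.2 hw).norm.const_mul M
  simpa using hsmall.add hA

/-- Strong continuity suffices: by Banach–Steinhaus the family is locally uniformly bounded. -/
theorem ContinuousOn.clm_apply_of_forall_continuousOn {X : Type*} [TopologicalSpace X]
    [WeaklyLocallyCompactSpace X] [CompleteSpace E] {s : Set X} (hs : IsClosed s)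
    {A : X → E →L[𝕜] F} (hA : ∀ v, ContinuousOn (fun x => A x v) s)
    {w : X → E} (hw : ContinuousOn w s) :
    ContinuousOn (fun x => A x (w x)) s := by
  intro x hx
  obtain ⟨K, hKc, hK⟩ := exists_compact_mem_nhds x
  obtain ⟨M, hM⟩ : ∃ M, ∀ y : ↥(s ∩ K), ‖A y‖ ≤ M := banach_steinhaus fun v =>
    ((hKc.inter_left hs).exists_bound_of_continuousOn ((hA v).mono inter_subset_left)).imp
      fun _ hC y => hC y y.2
  refine Tendsto.clm_apply_of_eventually_norm_le (M := M) ?_ (hA (w x) x hx) (hw x hx)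
  filter_upwards [self_mem_nhdsWithin, mem_nhdsWithin_of_mem_nhds hK] with y hys hyK
  exact hM ⟨y, hys, hyK⟩

end StrongContinuity

section RealAnalysis

theorem setIntegral_le_of_setLIntegral_ofReal_le {α : Type*} [MeasurableSpace α] {μ : Measure α}
    {f : α → ℝ} {s t : Set α} {C : ℝ} (hst : s ⊆ t) (hf0 : 0 ≤ᵐ[μ.restrict s] f)
    (hf : AEStronglyMeasurable f (μ.restrict s)) (hC : 0 ≤ C)
    (h : ∫⁻ x in t, ENNReal.ofReal (f x) ∂μ ≤ ENNReal.ofReal C) :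
    ∫ x in s, f x ∂μ ≤ C := by
  rw [integral_eq_lintegral_of_nonneg_ae hf0 hf]
  exact ENNReal.toReal_le_of_le_ofReal hC ((lintegral_mono_set hst).trans h)

theorem setLIntegral_Ioi_ofReal_le_of_integral_Ioc_le {b : ℝ → ℝ} {a C : ℝ}
    (hb : ∀ n : ℕ, IntegrableOn b (Ioc a n)) (hb0 : ∀ t, 0 ≤ b t)
    (h : ∀ n : ℕ, ∫ t in Ioc a n, b t ≤ C) :
    ∫⁻ t in Ioi a, ENNReal.ofReal (b t) ≤ ENNReal.ofReal C := by
  have hmono : Monotone fun n : ℕ => Ioc a n := fun m n hmn =>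
    Ioc_subset_Ioc_right (Nat.cast_le.2 hmn)
  rw [← iUnion_Ioc_eq_Ioi_self_iff.2 fun x _ => exists_nat_ge x,
    setLIntegral_iUnion_of_directed _ hmono.directed_le]
  refine iSup_le fun n => ?_
  rw [← ofReal_integral_eq_lintegral_ofReal (hb n) (ae_of_all _ hb0)]
  exact ENNReal.ofReal_le_ofReal (h n)

theorem integral_Ioc_le_of_hasDerivWithinAt_Ici {F F' b e : ℝ → ℝ} {a T M : ℝ} (haT : a ≤ T)
    (hF : ∀ t ∈ Ici a, HasDerivWithinAt F (F' t) (Ici a) t) (hFM : ∀ t ∈ Ici a, |F t| ≤ M)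
    (hb : IntegrableOn b (Icc a T)) (he : IntegrableOn e (Icc a T))
    (hbe : ∀ t ∈ Ioo a T, b t ≤ F' t + e t) :
    ∫ t in Ioc a T, b t ≤ 2 * M + ∫ t in Ioc a T, e t := by
  have hFTC := intervalIntegral.integral_le_sub_of_hasDeriv_right_of_le haT
    (fun t ht => (hF t ht.1).continuousWithinAt.mono Icc_subset_Ici_self)
    (fun t ht => (hF t ht.1.le).mono (Ioi_subset_Ici ht.1.le)) (hb.sub he)
    (fun t ht => by simp only [Pi.sub_apply]; linarith [hbe t ht])
  simp only [Pi.sub_apply] at hFTC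
  rw [intervalIntegral.integral_of_le haT,
    integral_sub (hb.mono_set Ioc_subset_Icc_self) (he.mono_set Ioc_subset_Icc_self)] at hFTC
  linarith [(abs_le.1 (hFM T haT)).2, (abs_le.1 (hFM a self_mem_Ici)).1]

theorem setLIntegral_Ioi_ofReal_le_of_hasDerivWithinAt {ι : Type*} [Fintype ι]
    {F F' b g : ℝ → ℝ} {e : ι → ℝ → ℝ} {c : ι → ℝ} {M : ℝ}
    (hF : ∀ t ∈ Ici (0 : ℝ), HasDerivWithinAt F (F' t) (Ici 0) t)
    (hFM : ∀ t ∈ Ici (0 : ℝ), |F t| ≤ M)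
    (hbF : ∀ t ∈ Ioi (0 : ℝ), b t ≤ F' t + (∑ j, e j t + g t))
    (hb : ContinuousOn b (Ici 0)) (hb0 : ∀ t, 0 ≤ b t)
    (he : ∀ j, ContinuousOn (e j) (Ici 0)) (he0 : ∀ j t, 0 ≤ e j t) (hc : ∀ j, 0 ≤ c j)
    (hec : ∀ j, ∫⁻ t in Ioi 0, ENNReal.ofReal (e j t) ≤ ENNReal.ofReal (c j))
    (hg : IntegrableOn g (Ici 0)) (hg0 : ∀ t, 0 ≤ g t) :
    ∫⁻ t in Ioi 0, ENNReal.ofReal (b t) ≤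
      ENNReal.ofReal (2 * M + (∑ j, c j) + ∫ t in Ici 0, g t) := by
  have hIcc : ∀ T : ℝ, Icc 0 T ⊆ Ici 0 := fun _ => Icc_subset_Ici_self
  have hb_int : ∀ T : ℝ, IntegrableOn b (Icc 0 T) := fun T => (hb.mono (hIcc T)).integrableOn_Icc
  have he_int : ∀ j (T : ℝ), IntegrableOn (e j) (Icc 0 T) :=
    fun j T => ((he j).mono (hIcc T)).integrableOn_Icc
  refine setLIntegral_Ioi_ofReal_le_of_integral_Ioc_le
    (fun n => (hb_int n).mono_set Ioc_subset_Icc_self) hb0 fun n => ?_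
  have hn : (0 : ℝ) ≤ n := n.cast_nonneg
  calc ∫ t in Ioc 0 (n : ℝ), b t
      ≤ 2 * M + ∫ t in Ioc 0 (n : ℝ), (∑ j, e j t + g t) :=
        integral_Ioc_le_of_hasDerivWithinAt_Ici hn hF hFM (hb_int n)
          ((integrable_finsetSum _ fun j _ => he_int j n).add (hg.mono_set (hIcc n)))
          fun t ht => hbF t ht.1
    _ = 2 * M + ((∑ j, ∫ t in Ioc 0 (n : ℝ), e j t) + ∫ t in Ioc 0 (n : ℝ), g t) := by
        have hIoc : Ioc 0 (n : ℝ) ⊆ Icc 0 n := Ioc_subset_Icc_self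
        rw [integral_add (integrable_finsetSum _ fun j _ => (he_int j n).mono_set hIoc)
            ((hg.mono_set (hIcc n)).mono_set hIoc),
          integral_finsetSum _ fun j _ => (he_int j n).mono_set hIoc]
    _ ≤ 2 * M + ((∑ j, c j) + ∫ t in Ici 0, g t) := by
        gcongr with j
        · exact setIntegral_le_of_setLIntegral_ofReal_le Ioc_subset_Ioi_self
            (ae_of_all _ (he0 j)) ((he_int j n).mono_set Ioc_subset_Icc_self).1 (hc j) (hec j)
        · exact ae_of_all _ hg0
        · exact Ioc_subset_Icc_self.trans (hIcc n)
    _ = 2 * M + (∑ j, c j) + ∫ t in Ici 0, g t := by ring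

end RealAnalysis

section KreinForm

variable {H : Type*} [NormedAddCommGroup H] [InnerProductSpace ℂ H]

theorem abs_re_inner_comp_le (A Φ : H →L[ℂ] H) (w : H) :
    |(⟪w, A (Φ w)⟫).re| ≤ ‖A‖ * ‖Φ‖ * ‖w‖ ^ 2 :=
  calc |(⟪w, A (Φ w)⟫).re| ≤ ‖w‖ * ‖(A.comp Φ) w‖ :=
        (Complex.abs_re_le_norm _).trans (norm_inner_le_norm _ _)
    _ ≤ ‖w‖ * (‖A‖ * ‖Φ‖ * ‖w‖) := by
        gcongr
        exact (A.comp Φ).le_of_opNorm_le (A.opNorm_comp_le Φ) w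
    _ = ‖A‖ * ‖Φ‖ * ‖w‖ ^ 2 := by ring

theorem neg_norm_mul_norm_le_re_inner (v w : H) : -(‖v‖ * ‖w‖) ≤ (⟪v, w⟫).re :=
  neg_le_of_abs_le ((Complex.abs_re_le_norm _).trans (norm_inner_le_norm _ _))

theorem re_inner_le_re_krein_add (K D R : H →L[ℂ] H) (w : H) :
    (⟪w, D w⟫).re ≤ (⟪w, (1 + K) (D w)⟫ + ⟪w, (1 + K) (R w)⟫).re
      + ‖w‖ ^ 2 * (‖K.comp D‖ + ‖1 + K‖ * ‖R‖) := by
  have hKD := neg_norm_mul_norm_le_re_inner w (K (D w))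
  have hR := neg_norm_mul_norm_le_re_inner w ((1 + K) (R w))
  have hKD' : ‖w‖ * ‖K (D w)‖ ≤ ‖w‖ * (‖K.comp D‖ * ‖w‖) := by
    gcongr; exact (K.comp D).le_opNorm w
  have hR' : ‖w‖ * ‖(1 + K) (R w)‖ ≤ ‖w‖ * (‖1 + K‖ * ‖R‖ * ‖w‖) := by
    gcongr; exact ((1 + K).comp R).le_of_opNorm_le ((1 + K).opNorm_comp_le R) w
  have hsplit : ⟪w, (1 + K) (D w)⟫ = ⟪w, D w⟫ + ⟪w, K (D w)⟫ := by simp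
  rw [Complex.add_re, hsplit, Complex.add_re]
  linarith

end KreinForm

theorem setLIntegral_Ioi_norm_sq_le_of_hasDerivWithinAt {H : Type*} [NormedAddCommGroup H]
    [InnerProductSpace ℂ H] [CompleteSpace H] {ι : Type*} [Fintype ι]
    (K : H →L[ℂ] H) (Φ D R0 B : ℝ → H →L[ℂ] H) (B' : ι → ℝ → H →L[ℂ] H)
    {w : ℝ → H} {c : ι → ℝ} {W CΦ : ℝ}
    (hw : Continuous w) (hwW : ∀ t ∈ Ici (0 : ℝ), ‖w t‖ ≤ W)
    (hΦ : ∀ t ∈ Ici (0 : ℝ), ‖Φ t‖ ≤ CΦ)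
    (hBcont : ∀ v : H, ContinuousOn (fun t : ℝ => B t v) (Ici 0))
    (hB'cont : ∀ (j : ι) (v : H), ContinuousOn (fun t : ℝ => B' j t v) (Ici 0))
    (hderiv : ∀ t ∈ Ici (0 : ℝ),
      HasDerivWithinAt (fun s : ℝ => ⟪w s, (1 + K) (Φ s (w s))⟫)
        (⟪w t, (1 + K) (D t (w t))⟫ + ⟪w t, (1 + K) (R0 t (w t))⟫) (Ici 0) t)
    (hR0int : IntegrableOn (fun t : ℝ => ‖R0 t‖) (Ici 0))
    (hKDint : IntegrableOn (fun t : ℝ => ‖K.comp (D t)‖) (Ici 0))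
    (hD : ∀ t ∈ Ici (0 : ℝ), ∀ v : H,
      ‖B t v‖ ^ 2 - ∑ j, ‖B' j t v‖ ^ 2 ≤ (⟪v, D t v⟫).re)
    (hc : ∀ j, 0 ≤ c j)
    (hB'w : ∀ j, ∫⁻ t in Ioi 0, ENNReal.ofReal (‖B' j t (w t)‖ ^ 2) ≤ ENNReal.ofReal (c j)) :
    ∫⁻ t in Ioi 0, ENNReal.ofReal (‖B t (w t)‖ ^ 2) ≤
      ENNReal.ofReal (2 * (‖1 + K‖ * CΦ * W ^ 2) + (∑ j, c j)
        + ∫ t in Ici 0, W ^ 2 * (‖K.comp (D t)‖ + ‖1 + K‖ * ‖R0 t‖)) := by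
  have hW : 0 ≤ W := (norm_nonneg _).trans (hwW 0 self_mem_Ici)
  have hCΦ : 0 ≤ CΦ := (norm_nonneg _).trans (hΦ 0 self_mem_Ici)
  refine setLIntegral_Ioi_ofReal_le_of_hasDerivWithinAt
    (F := fun s => (⟪w s, (1 + K) (Φ s (w s))⟫).re) (b := fun t => ‖B t (w t)‖ ^ 2)
    (e := fun j t => ‖B' j t (w t)‖ ^ 2)
    (fun t ht => Complex.reCLM.hasFDerivAt.comp_hasDerivWithinAt t (hderiv t ht))
    (fun t ht => (abs_re_inner_comp_le _ _ _).trans (by gcongr; exacts [hΦ t ht, hwW t ht]))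
    (fun t ht => ?_)
    ((ContinuousOn.clm_apply_of_forall_continuousOn isClosed_Ici hBcont
      hw.continuousOn).norm.pow 2) (fun _ => sq_nonneg _)
    (fun j => (ContinuousOn.clm_apply_of_forall_continuousOn isClosed_Ici (hB'cont j)
      hw.continuousOn).norm.pow 2) (fun _ _ => sq_nonneg _) hc hB'w
    ((hKDint.add (hR0int.const_mul _)).const_mul _) (fun _ => by positivity)
  have ht0 : t ∈ Ici (0 : ℝ) := Ioi_subset_Ici_self ht
  have hkrein := re_inner_le_re_krein_add K (D t) (R0 t) (w t)
  have herr : ‖w t‖ ^ 2 * (‖K.comp (D t)‖ + ‖1 + K‖ * ‖R0 t‖)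
      ≤ W ^ 2 * (‖K.comp (D t)‖ + ‖1 + K‖ * ‖R0 t‖) := by
    gcongr; exact hwW t ht0
  simp only [Complex.reCLM_apply]
  linarith [hD t ht0 (w t)]

theorem propagation_estimate_integrable_remainder_general
    {H : Type*} [NormedAddCommGroup H] [InnerProductSpace ℂ H] [CompleteSpace H]
    (K : H →L[ℂ] H)
    (U : ℝ → H →L[ℂ] H)
    (hUcont : ∀ u : H, Continuous fun t : ℝ => U t u)
    (P : H →L[ℂ] H) (hPU : ∀ t : ℝ, P.comp (U t) = (U t).comp P)
    (hUPbdd : ∃ Cb : ℝ, ∀ t : ℝ, 0 ≤ t → ‖(U t).comp P‖ ≤ Cb)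
    (Φ : ℝ → H →L[ℂ] H)
    (hΦbdd : ∃ CΦ : ℝ, ∀ t : ℝ, 0 ≤ t → ‖Φ t‖ ≤ CΦ)
    (N : ℕ) (D R0 B : ℝ → H →L[ℂ] H) (B' : Fin N → ℝ → H →L[ℂ] H)
    (hBcont : ∀ u : H, ContinuousOn (fun t : ℝ => B t u) (Ici 0))
    (hB'cont : ∀ (j : Fin N) (u : H), ContinuousOn (fun t : ℝ => B' j t u) (Ici 0))
    (c : Fin N → ℝ) (hc : ∀ j, 0 ≤ c j)
    -- (a) the Heisenberg derivative identity, with both terms in the Krein form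
    (ha : ∀ u : H, ∀ t ∈ Ici (0:ℝ),
      HasDerivWithinAt
        (fun s : ℝ => ⟪P (U s u), ((1 : H →L[ℂ] H) + K) (Φ s (P (U s u)))⟫)
        (⟪P (U t u), ((1 : H →L[ℂ] H) + K) (D t (P (U t u)))⟫
          + ⟪P (U t u), ((1 : H →L[ℂ] H) + K) (R0 t (P (U t u)))⟫)
        (Ici 0) t)
    -- (b) integrability of the remainders
    (hR0int : IntegrableOn (fun t : ℝ => ‖R0 t‖) (Ici 0))
    (hKDint : IntegrableOn (fun t : ℝ => ‖K.comp (D t)‖) (Ici 0))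
    -- (c) selfadjointness and lower bound for D(t)
    (hD : ∀ t ∈ Ici (0:ℝ), IsSelfAdjoint (D t) ∧
      ∀ w : H, ‖B t w‖ ^ 2 - ∑ j : Fin N, ‖B' j t w‖ ^ 2 ≤ (⟪w, D t w⟫).re)
    -- (d) integral propagation estimates for the B_j
    (hd : ∀ (u : H) (j : Fin N),
      ∫⁻ t in Ioi (0:ℝ), ENNReal.ofReal (‖B' j t (P (U t u))‖ ^ 2)
        ≤ ENNReal.ofReal (c j * ‖u‖ ^ 2)) :
    ∃ C' : ℝ, 0 < C' ∧ ∀ u : H,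
      ∫⁻ t in Ioi (0:ℝ), ENNReal.ofReal (‖B t (P (U t u))‖ ^ 2)
        ≤ ENNReal.ofReal (C' * ‖u‖ ^ 2) := by
  obtain ⟨Cb, hCb⟩ := hUPbdd
  obtain ⟨CΦ, hCΦ⟩ := hΦbdd
  set C₀ := 2 * (‖1 + K‖ * CΦ * Cb ^ 2) + (∑ j, c j)
    + Cb ^ 2 * ∫ t in Ici 0, (‖K.comp (D t)‖ + ‖1 + K‖ * ‖R0 t‖)
  refine ⟨max C₀ 1, lt_max_of_lt_right one_pos, fun u => ?_⟩
  have hwW : ∀ t ∈ Ici (0 : ℝ), ‖P (U t u)‖ ≤ Cb * ‖u‖ := fun t ht => by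
    rw [← ContinuousLinearMap.comp_apply, hPU]
    exact ((U t).comp P).le_of_opNorm_le (hCb t ht) u
  calc _ ≤ ENNReal.ofReal (2 * (‖1 + K‖ * CΦ * (Cb * ‖u‖) ^ 2) + (∑ j, c j * ‖u‖ ^ 2)
        + ∫ t in Ici 0, (Cb * ‖u‖) ^ 2 * (‖K.comp (D t)‖ + ‖1 + K‖ * ‖R0 t‖)) :=
        setLIntegral_Ioi_norm_sq_le_of_hasDerivWithinAt K Φ D R0 B B'
          (P.continuous.comp (hUcont u)) hwW hCΦ hBcont hB'cont (ha u) hR0int hKDint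
          (fun t ht => (hD t ht).2) (fun j => mul_nonneg (hc j) (sq_nonneg _)) (hd u)
    _ = ENNReal.ofReal (C₀ * ‖u‖ ^ 2) := by
        rw [integral_const_mul, ← Finset.sum_mul]
        congr 1
        ring
    _ ≤ ENNReal.ofReal (max C₀ 1 * ‖u‖ ^ 2) := by
        gcongr
        exact le_max_left _ _

/-- **Propagation estimate with integrable remainders** (Corollary D.2(1)). -/
theorem propagation_estimate_integrable_remainder
    {H : Type*} [NormedAddCommGroup H] [InnerProductSpace ℂ H] [CompleteSpace H]
    (K : H →L[ℂ] H) (hK : IsSelfAdjoint K)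
    (hKunit : IsUnit ((1 : H →L[ℂ] H) + K))
    (U : ℝ → H →L[ℂ] H) (hU0 : U 0 = 1)
    (hUgrp : ∀ s t : ℝ, U (s + t) = (U s).comp (U t))
    (hUcont : ∀ u : H, Continuous fun t : ℝ => U t u)
    (hUkrein : ∀ (t : ℝ) (u v : H),
      ⟪U t u, ((1 : H →L[ℂ] H) + K) (U t v)⟫ = ⟪u, ((1 : H →L[ℂ] H) + K) v⟫)
    (P : H →L[ℂ] H) (hPU : ∀ t : ℝ, P.comp (U t) = (U t).comp P)
    (hUPbdd : ∃ Cb : ℝ, ∀ t : ℝ, 0 ≤ t → ‖(U t).comp P‖ ≤ Cb)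
    (Φ : ℝ → H →L[ℂ] H)
    (hΦcont : ∀ u : H, ContinuousOn (fun t : ℝ => Φ t u) (Ici 0))
    (hΦbdd : ∃ CΦ : ℝ, ∀ t : ℝ, 0 ≤ t → ‖Φ t‖ ≤ CΦ)
    (N : ℕ) (D R0 B : ℝ → H →L[ℂ] H) (B' : Fin N → ℝ → H →L[ℂ] H)
    (hDcont : ∀ u : H, ContinuousOn (fun t : ℝ => D t u) (Ici 0))
    (hR0cont : ∀ u : H, ContinuousOn (fun t : ℝ => R0 t u) (Ici 0))
    (hBcont : ∀ u : H, ContinuousOn (fun t : ℝ => B t u) (Ici 0))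
    (hB'cont : ∀ (j : Fin N) (u : H), ContinuousOn (fun t : ℝ => B' j t u) (Ici 0))
    (c : Fin N → ℝ) (hc : ∀ j, 0 ≤ c j)
    -- (a) the Heisenberg derivative identity, with both terms in the Krein form
    (ha : ∀ u : H, ∀ t ∈ Ici (0:ℝ),
      HasDerivWithinAt
        (fun s : ℝ => ⟪P (U s u), ((1 : H →L[ℂ] H) + K) (Φ s (P (U s u)))⟫)
        (⟪P (U t u), ((1 : H →L[ℂ] H) + K) (D t (P (U t u)))⟫
          + ⟪P (U t u), ((1 : H →L[ℂ] H) + K) (R0 t (P (U t u)))⟫)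
        (Ici 0) t)
    -- (b) integrability of the remainders
    (hR0int : IntegrableOn (fun t : ℝ => ‖R0 t‖) (Ici 0))
    (hKDint : IntegrableOn (fun t : ℝ => ‖K.comp (D t)‖) (Ici 0))
    -- (c) selfadjointness and lower bound for D(t)
    (hD : ∀ t ∈ Ici (0:ℝ), IsSelfAdjoint (D t) ∧
      ∀ w : H, ‖B t w‖ ^ 2 - ∑ j : Fin N, ‖B' j t w‖ ^ 2 ≤ (⟪w, D t w⟫).re)
    -- (d) integral propagation estimates for the B_j
    (hd : ∀ (u : H) (j : Fin N),
      ∫⁻ t in Ioi (0:ℝ), ENNReal.ofReal (‖B' j t (P (U t u))‖ ^ 2)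
        ≤ ENNReal.ofReal (c j * ‖u‖ ^ 2)) :
    ∃ C' : ℝ, 0 < C' ∧ ∀ u : H,
      ∫⁻ t in Ioi (0:ℝ), ENNReal.ofReal (‖B t (P (U t u))‖ ^ 2)
        ≤ ENNReal.ofReal (C' * ‖u‖ ^ 2) :=
  propagation_estimate_integrable_remainder_general K U hUcont P hPU hUPbdd Φ hΦbdd N D R0 B B'
    hBcont hB'cont c hc ha hR0int hKDint hD hd
end

section
/- Existence of limits with integrable remainders (Corollary D.2(2)). Let D(t), R0(t), B_1(t), ..., B_N(t) be strongly continuous families of bounded operators on H for t ≥ 0 and c_1, ..., c_N ≥ 0, and assume: (a) for every u ∈ H the function f_u(t) := [P u_t, Φ(t) P u_t] is differentiable on [0,∞) with f_u'(t) = [P u_t, D(t) P u_t] + [P u_t, R0(t) P u_t]; (b) t ↦ ‖R0(t)‖ and t ↦ ‖K D(t)‖ are integrable on [0,∞); (c) |⟨w, D(t) w'⟩| ≤ Σ_{j=1}^{N} ‖B_j(t) w‖ · ‖B_j(t) w'‖ for all w, w' ∈ H; (d) ∫_0^∞ ‖B_j(t) P u_t‖² dt ≤ c_j ‖u‖² for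 every u ∈ H and every j. Then for every u ∈ H the limit lim_{t→+∞} [P u_t, Φ(t) P u_t] exists. -/
open MeasureTheory Set Filter
open scoped ComplexInnerProductSpace Topology

/-! With `w t := P (U t u)`, the derivative of `t ↦ [w t, Φ t (w t)]` is
`[w t, D t (w t)] + [w t, R0 t (w t)]`. Splitting `[w, D w] = ⟨w, D w⟩ + ⟨w, K D w⟩`, the first
term is bounded by `∑ j, ‖B' j t (w t)‖ ^ 2`, integrable by (d), and the remaining terms by
`(‖K D t‖ + ‖1 + K‖ ‖R0 t‖) (sup ‖U t P‖ ‖u‖) ^ 2`, integrable by (b). A function whose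
derivative is integrable on `(0, ∞)` has a limit at infinity. -/

section StronglyContinuous

variable {X 𝕜 E F : Type*} [TopologicalSpace X] [NontriviallyNormedField 𝕜]
  [NormedAddCommGroup E] [NormedSpace 𝕜 E] [NormedAddCommGroup F] [NormedSpace 𝕜 F]
  {T : X → E →L[𝕜] F} {w : X → E} {s : Set X}

theorem IsCompact.exists_bound_of_strongly_continuousOn [CompleteSpace E] {k : Set X}
    (hk : IsCompact k) (hT : ∀ v, ContinuousOn (fun x ↦ T x v) k) :
    ∃ C, ∀ x ∈ k, ‖T x‖ ≤ C := by
  obtain ⟨C, hC⟩ := banach_steinhaus (g := fun x : k ↦ T x) fun v ↦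
    (hk.exists_bound_of_continuousOn (hT v)).imp fun _ h x ↦ h x x.2
  exact ⟨C, fun x hx ↦ hC ⟨x, hx⟩⟩

theorem ContinuousWithinAt.clm_apply_of_eventually_norm_le {x₀ : X} {C : ℝ}
    (hbdd : ∀ᶠ x in 𝓝[s] x₀, ‖T x‖ ≤ C)
    (hT : ContinuousWithinAt (fun x ↦ T x (w x₀)) s x₀) (hw : ContinuousWithinAt w s x₀) :
    ContinuousWithinAt (fun x ↦ T x (w x)) s x₀ := by
  rw [ContinuousWithinAt, tendsto_iff_norm_sub_tendsto_zero]
  have hlim : Tendsto (fun x ↦ C * ‖w x - w x₀‖ + ‖T x (w x₀) - T x₀ (w x₀)‖) (𝓝[s] x₀)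
      (𝓝 0) := by
    simpa using ((tendsto_iff_norm_sub_tendsto_zero.mp hw).const_mul C).add
      (tendsto_iff_norm_sub_tendsto_zero.mp hT)
  refine squeeze_zero' (.of_forall fun _ ↦ norm_nonneg _) ?_ hlim
  filter_upwards [hbdd] with x hx
  calc ‖T x (w x) - T x₀ (w x₀)‖
      ≤ ‖T x (w x - w x₀)‖ + ‖T x (w x₀) - T x₀ (w x₀)‖ := by
        rw [map_sub]; exact norm_sub_le_norm_sub_add_norm_sub _ _ _
    _ ≤ C * ‖w x - w x₀‖ + ‖T x (w x₀) - T x₀ (w x₀)‖ := by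
        gcongr; exact (T x).le_of_opNorm_le hx _

theorem ContinuousOn.clm_apply_of_strongly [WeaklyLocallyCompactSpace X] [CompleteSpace E]
    (hs : IsClosed s) (hT : ∀ v, ContinuousOn (fun x ↦ T x v) s) (hw : ContinuousOn w s) :
    ContinuousOn (fun x ↦ T x (w x)) s := by
  intro x₀ hx₀
  obtain ⟨k, hk, hk_nhds⟩ := exists_compact_mem_nhds x₀
  obtain ⟨C, hC⟩ := (hk.inter_right hs).exists_bound_of_strongly_continuousOn
    fun v ↦ (hT v).mono inter_subset_right
  refine ContinuousWithinAt.clm_apply_of_eventually_norm_le (C := C) ?_ (hT _ x₀ hx₀) (hw x₀ hx₀)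
  filter_upwards [inter_mem_nhdsWithin s hk_nhds, self_mem_nhdsWithin] with x hxk hxs
  exact hC x ⟨hxk.2, hxs⟩

end StronglyContinuous

theorem exists_tendsto_atTop_of_hasDerivAt_of_norm_le {E : Type*} [NormedAddCommGroup E]
    [NormedSpace ℝ E] [CompleteSpace E] {f g : ℝ → E} {M : ℝ → ℝ} {a : ℝ}
    (hf : ∀ t ∈ Ioi a, HasDerivAt f (g t) t) (hM : IntegrableOn M (Ioi a))
    (hgM : ∀ t ∈ Ioi a, ‖g t‖ ≤ M t) :
    ∃ l, Tendsto f atTop (𝓝 l) := by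
  have hg_meas : AEStronglyMeasurable g (volume.restrict (Ioi a)) :=
    (aestronglyMeasurable_deriv f _).congr <|
      (ae_restrict_iff' measurableSet_Ioi).mpr (.of_forall fun t ht ↦ (hf t ht).deriv)
  have hg_int : IntegrableOn g (Ioi a) :=
    hM.mono' hg_meas ((ae_restrict_iff' measurableSet_Ioi).mpr (.of_forall hgM))
  exact ⟨_, tendsto_limUnder_of_hasDerivAt_of_integrableOn_Ioi hf hg_int⟩

section InnerProduct

open scoped InnerProductSpace

variable {𝕜 E : Type*} [RCLike 𝕜] [NormedAddCommGroup E] [InnerProductSpace 𝕜 E]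

theorem norm_inner_apply_le (T : E →L[𝕜] E) (w : E) : ‖⟪w, T w⟫_𝕜‖ ≤ ‖T‖ * ‖w‖ ^ 2 :=
  calc ‖⟪w, T w⟫_𝕜‖ ≤ ‖w‖ * (‖T‖ * ‖w‖) :=
        (norm_inner_le_norm w (T w)).trans (by gcongr; exact T.le_opNorm w)
    _ = ‖T‖ * ‖w‖ ^ 2 := by ring

theorem norm_inner_one_add_apply_le (K T : E →L[𝕜] E) (w : E) :
    ‖⟪w, (1 + K) (T w)⟫_𝕜‖ ≤ ‖⟪w, T w⟫_𝕜‖ + ‖K.comp T‖ * ‖w‖ ^ 2 := by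
  have : ⟪w, (1 + K) (T w)⟫_𝕜 = ⟪w, T w⟫_𝕜 + ⟪w, K.comp T w⟫_𝕜 := by
    simp [inner_add_right]
  rw [this]
  exact (norm_add_le _ _).trans (by gcongr; exact norm_inner_apply_le _ w)

theorem norm_inner_one_add_apply_add_le {ι : Type*} [Fintype ι] (K D R : E →L[𝕜] E)
    (B : ι → E →L[𝕜] E) {w : E} {C : ℝ} (hD : ‖⟪w, D w⟫_𝕜‖ ≤ ∑ j, ‖B j w‖ * ‖B j w‖)
    (hw : ‖w‖ ≤ C) :
    ‖⟪w, (1 + K) (D w)⟫_𝕜 + ⟪w, (1 + K) (R w)⟫_𝕜‖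
      ≤ ∑ j, ‖B j w‖ ^ 2 + (‖K.comp D‖ + ‖1 + K‖ * ‖R‖) * C ^ 2 := by
  have hR : ‖⟪w, (1 + K) (R w)⟫_𝕜‖ ≤ ‖1 + K‖ * ‖R‖ * ‖w‖ ^ 2 :=
    (norm_inner_apply_le ((1 + K).comp R) w).trans (by gcongr; exact (1 + K).opNorm_comp_le R)
  calc _ ≤ ‖⟪w, D w⟫_𝕜‖ + ‖K.comp D‖ * ‖w‖ ^ 2 + ‖1 + K‖ * ‖R‖ * ‖w‖ ^ 2 :=
        (norm_add_le _ _).trans (add_le_add (norm_inner_one_add_apply_le K D w) hR)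
    _ ≤ ∑ j, ‖B j w‖ ^ 2 + ‖K.comp D‖ * C ^ 2 + ‖1 + K‖ * ‖R‖ * C ^ 2 := by
        gcongr; simpa only [sq] using hD
    _ = _ := by ring

end InnerProduct

theorem limit_exists_integrable_remainder_general
    {H : Type*} [NormedAddCommGroup H] [InnerProductSpace ℂ H] [CompleteSpace H]
    (K : H →L[ℂ] H)
    (U : ℝ → H →L[ℂ] H)
    (hUcont : ∀ u : H, Continuous fun t : ℝ => U t u)
    (P : H →L[ℂ] H) (hPU : ∀ t : ℝ, P.comp (U t) = (U t).comp P)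
    (hUPbdd : ∃ Cb : ℝ, ∀ t : ℝ, 0 ≤ t → ‖(U t).comp P‖ ≤ Cb)
    (Φ : ℝ → H →L[ℂ] H)
    (N : ℕ) (D R0 : ℝ → H →L[ℂ] H) (B' : Fin N → ℝ → H →L[ℂ] H)
    (hB'cont : ∀ (j : Fin N) (u : H), ContinuousOn (fun t : ℝ => B' j t u) (Ici 0))
    (c : Fin N → ℝ)
    -- (a) the Heisenberg derivative identity, with both terms in the Krein form
    (ha : ∀ u : H, ∀ t ∈ Ici (0:ℝ),
      HasDerivWithinAt
        (fun s : ℝ => ⟪P (U s u), ((1 : H →L[ℂ] H) + K) (Φ s (P (U s u)))⟫)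
        (⟪P (U t u), ((1 : H →L[ℂ] H) + K) (D t (P (U t u)))⟫
          + ⟪P (U t u), ((1 : H →L[ℂ] H) + K) (R0 t (P (U t u)))⟫)
        (Ici 0) t)
    -- (b) integrability of the remainders
    (hR0int : IntegrableOn (fun t : ℝ => ‖R0 t‖) (Ici 0))
    (hKDint : IntegrableOn (fun t : ℝ => ‖K.comp (D t)‖) (Ici 0))
    -- (c) sesquilinear bound for D(t)
    (hD : ∀ t ∈ Ici (0:ℝ), ∀ w w' : H,
      ‖⟪w, D t w'⟫‖ ≤ ∑ j : Fin N, ‖B' j t w‖ * ‖B' j t w'‖)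
    -- (d) integral propagation estimates for the B_j
    (hd : ∀ (u : H) (j : Fin N),
      ∫⁻ t in Ioi (0:ℝ), ENNReal.ofReal (‖B' j t (P (U t u))‖ ^ 2)
        ≤ ENNReal.ofReal (c j * ‖u‖ ^ 2)) :
    ∀ u : H, ∃ l : ℂ,
      Tendsto (fun t : ℝ => ⟪P (U t u), ((1 : H →L[ℂ] H) + K) (Φ t (P (U t u)))⟫)
        atTop (𝓝 l) := by
  intro u
  obtain ⟨Cb, hCb⟩ := hUPbdd
  have hw_bdd : ∀ t ∈ Ioi (0:ℝ), ‖P (U t u)‖ ≤ Cb * ‖u‖ := fun t ht ↦ by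
    rw [← ContinuousLinearMap.comp_apply, hPU]
    exact ((U t).comp P).le_of_opNorm_le (hCb t ht.le) u
  have hB_int (j : Fin N) : IntegrableOn (fun t ↦ ‖B' j t (P (U t u))‖ ^ 2) (Ioi 0) := by
    have hcont := (ContinuousOn.clm_apply_of_strongly isClosed_Ici (hB'cont j)
      (P.continuous.comp (hUcont u)).continuousOn).norm.pow 2
    refine ⟨(hcont.mono Ioi_subset_Ici_self).aestronglyMeasurable measurableSet_Ioi, ?_⟩
    rw [hasFiniteIntegral_iff_ofReal (.of_forall fun t ↦ by positivity)]
    exact (hd u j).trans_lt ENNReal.ofReal_lt_top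
  refine exists_tendsto_atTop_of_hasDerivAt_of_norm_le
    (fun t ht ↦ (ha u t (Ioi_subset_Ici_self ht)).hasDerivAt (Ici_mem_nhds ht)) ?_
    (fun t ht ↦ norm_inner_one_add_apply_add_le K (D t) (R0 t) (B' · t)
      (hD t (Ioi_subset_Ici_self ht) _ _) (hw_bdd t ht))
  refine (integrable_finsetSum _ fun j _ ↦ hB_int j).add (Integrable.mul_const ?_ _)
  exact (hKDint.add (hR0int.const_mul _)).mono_set Ioi_subset_Ici_self

/-- **Existence of limits with integrable remainders** (Corollary D.2(2)). -/
theorem limit_exists_integrable_remainder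
    {H : Type*} [NormedAddCommGroup H] [InnerProductSpace ℂ H] [CompleteSpace H]
    (K : H →L[ℂ] H) (hK : IsSelfAdjoint K)
    (hKunit : IsUnit ((1 : H →L[ℂ] H) + K))
    (U : ℝ → H →L[ℂ] H) (hU0 : U 0 = 1)
    (hUgrp : ∀ s t : ℝ, U (s + t) = (U s).comp (U t))
    (hUcont : ∀ u : H, Continuous fun t : ℝ => U t u)
    (hUkrein : ∀ (t : ℝ) (u v : H),
      ⟪U t u, ((1 : H →L[ℂ] H) + K) (U t v)⟫ = ⟪u, ((1 : H →L[ℂ] H) + K) v⟫)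
    (P : H →L[ℂ] H) (hPU : ∀ t : ℝ, P.comp (U t) = (U t).comp P)
    (hUPbdd : ∃ Cb : ℝ, ∀ t : ℝ, 0 ≤ t → ‖(U t).comp P‖ ≤ Cb)
    (Φ : ℝ → H →L[ℂ] H)
    (hΦcont : ∀ u : H, ContinuousOn (fun t : ℝ => Φ t u) (Ici 0))
    (hΦbdd : ∃ CΦ : ℝ, ∀ t : ℝ, 0 ≤ t → ‖Φ t‖ ≤ CΦ)
    (N : ℕ) (D R0 : ℝ → H →L[ℂ] H) (B' : Fin N → ℝ → H →L[ℂ] H)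
    (hDcont : ∀ u : H, ContinuousOn (fun t : ℝ => D t u) (Ici 0))
    (hR0cont : ∀ u : H, ContinuousOn (fun t : ℝ => R0 t u) (Ici 0))
    (hB'cont : ∀ (j : Fin N) (u : H), ContinuousOn (fun t : ℝ => B' j t u) (Ici 0))
    (c : Fin N → ℝ) (hc : ∀ j, 0 ≤ c j)
    -- (a) the Heisenberg derivative identity, with both terms in the Krein form
    (ha : ∀ u : H, ∀ t ∈ Ici (0:ℝ),
      HasDerivWithinAt
        (fun s : ℝ => ⟪P (U s u), ((1 : H →L[ℂ] H) + K) (Φ s (P (U s u)))⟫)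
        (⟪P (U t u), ((1 : H →L[ℂ] H) + K) (D t (P (U t u)))⟫
          + ⟪P (U t u), ((1 : H →L[ℂ] H) + K) (R0 t (P (U t u)))⟫)
        (Ici 0) t)
    -- (b) integrability of the remainders
    (hR0int : IntegrableOn (fun t : ℝ => ‖R0 t‖) (Ici 0))
    (hKDint : IntegrableOn (fun t : ℝ => ‖K.comp (D t)‖) (Ici 0))
    -- (c) sesquilinear bound for D(t)
    (hD : ∀ t ∈ Ici (0:ℝ), ∀ w w' : H,
      ‖⟪w, D t w'⟫‖ ≤ ∑ j : Fin N, ‖B' j t w‖ * ‖B' j t w'‖)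
    -- (d) integral propagation estimates for the B_j
    (hd : ∀ (u : H) (j : Fin N),
      ∫⁻ t in Ioi (0:ℝ), ENNReal.ofReal (‖B' j t (P (U t u))‖ ^ 2)
        ≤ ENNReal.ofReal (c j * ‖u‖ ^ 2)) :
    ∀ u : H, ∃ l : ℂ,
      Tendsto (fun t : ℝ => ⟪P (U t u), ((1 : H →L[ℂ] H) + K) (Φ t (P (U t u)))⟫)
        atTop (𝓝 l) :=
  limit_exists_integrable_remainder_general K U hUcont P hPU hUPbdd Φ N D R0 B' hB'cont c ha hR0int
    hKDint hD hd
end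

section
/- Cook-type existence of strong limits, Hilbert-unitary target (Proposition D.3(1)). Assume: (a) for all u, v ∈ H the function g_{v,u}(t) := ⟨U0(t)v, P0 M(t) P1 U1(t) u⟩ is differentiable on [0,∞) with |g_{v,u}'(t)| ≤ Σ_{i=1}^{N} ‖B0_i(t) P0 U0(t) v‖ · ‖B1_i(t) P1 U1(t) u‖; (b) there is C > 0 such that ∫_0^∞ ‖B0_i(t) P0 U0(t) v‖² dt ≤ C ‖v‖² and ∫_0^∞ ‖B1_i(t) P1 U1(t) u‖² dt ≤ C ‖u‖² for all u, v ∈ H and all i. Then for every u ∈ H the vectors U0(t)^{-1} P0 M(t) P1 U1(t) u converge in the norm of H as t → +∞; that is, the strong limit s-lim_{t→+∞} U0(t)^{-1} P0 M(t) P1 U1(t) exists. -/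
/-!
Cook's method, run weakly. Write `f t = U0(-t) P0 M(t) P1 U1(t) u`; unitarity of `U0` gives
`⟪v, f t⟫ = g_{v,u}(t)`. Integrating the derivative bound (a) over `[s, t]` and applying
Cauchy–Schwarz in `L²(s, t)` to each term, hypothesis (b) yields
`|⟪v, f t - f s⟫| ≤ √C ‖v‖ ∑ᵢ (∫ₛ^∞ ‖B1_i P1 U1 u‖²)^{1/2}`.
Taking `v = f t - f s` bounds `‖f t - f s‖` by tails of convergent integrals, so `f` is Cauchy
at `+∞`.
-/

open MeasureTheory Set Filter
open scoped ComplexInnerProductSpace Topology ENNReal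

theorem IsCompact.continuousOn_clm_apply_of_pointwise {𝕜 E F X : Type*}
    [NontriviallyNormedField 𝕜] [NormedAddCommGroup E] [NormedSpace 𝕜 E] [CompleteSpace E]
    [NormedAddCommGroup F] [NormedSpace 𝕜 F] [TopologicalSpace X]
    {K : Set X} (hK : IsCompact K) {A : X → E →L[𝕜] F} {x : X → E}
    (hA : ∀ y, ContinuousOn (fun t => A t y) K) (hx : ContinuousOn x K) :
    ContinuousOn (fun t => A t (x t)) K := by
  obtain ⟨C, hC⟩ : ∃ C, ∀ t : K, ‖A t‖ ≤ C :=
    banach_steinhaus fun y => (hK.exists_bound_of_continuousOn (hA y)).imp fun _ h t => h t t.2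
  intro t₀ ht₀
  have hsmall : Tendsto (fun t => A t (x t - x t₀)) (𝓝[K] t₀) (𝓝 0) := by
    refine squeeze_zero_norm' ?_ (by simpa using ((hx t₀ ht₀).sub_const (x t₀)).norm.const_mul C)
    filter_upwards [self_mem_nhdsWithin] with t ht
    exact (A t).le_of_opNorm_le (hC ⟨t, ht⟩) _
  simpa [ContinuousWithinAt] using hsmall.add (hA (x t₀) t₀ ht₀)

theorem ContinuousOn.clm_apply_Ici_of_pointwise {𝕜 E F : Type*}
    [NontriviallyNormedField 𝕜] [NormedAddCommGroup E] [NormedSpace 𝕜 E] [CompleteSpace E]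
    [NormedAddCommGroup F] [NormedSpace 𝕜 F] {a : ℝ} {A : ℝ → E →L[𝕜] F} {x : ℝ → E}
    (hA : ∀ y, ContinuousOn (fun t => A t y) (Ici a)) (hx : ContinuousOn x (Ici a)) :
    ContinuousOn (fun t => A t (x t)) (Ici a) := by
  intro t₀ ht₀
  have hIcc : Icc a (t₀ + 1) ∈ 𝓝[Ici a] t₀ := by
    rw [← Ici_inter_Iic]
    exact inter_mem_nhdsWithin _ (Iic_mem_nhds (lt_add_one t₀))
  exact ((isCompact_Icc.continuousOn_clm_apply_of_pointwise
    (fun y => (hA y).mono Icc_subset_Ici_self) (hx.mono Icc_subset_Ici_self)) t₀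
    ⟨ht₀, (lt_add_one t₀).le⟩).mono_of_mem_nhdsWithin hIcc

theorem tendsto_setLIntegral_Ioi_atTop_zero {μ : Measure ℝ} {f : ℝ → ℝ≥0∞} {a : ℝ}
    (hf : ∫⁻ x in Ioi a, f x ∂μ ≠ ∞) :
    Tendsto (fun s => ∫⁻ x in Ioi s, f x ∂μ) atTop (𝓝 0) := by
  have h := tendsto_measure_iInter_atTop (μ := μ.withDensity f)
    (fun s => measurableSet_Ioi.nullMeasurableSet) (fun _ _ hst => Ioi_subset_Ioi hst)
    ⟨a, by rwa [withDensity_apply f measurableSet_Ioi]⟩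
  have hempty : ⋂ s : ℝ, Ioi s = ∅ := iInter_eq_empty_iff.2 fun x => ⟨x, lt_irrefl x⟩
  rw [hempty, measure_empty] at h
  simpa [Function.comp_def, withDensity_apply f measurableSet_Ioi] using h

theorem ENNReal.ofReal_rpow_inv_two (A : ℝ) :
    ENNReal.ofReal A ^ (2⁻¹ : ℝ) = ENNReal.ofReal √A := by
  rcases le_total 0 A with hA | hA
  · rw [ENNReal.ofReal_rpow_of_nonneg hA (by norm_num), Real.sqrt_eq_rpow, one_div]
  · rw [ENNReal.ofReal_of_nonpos hA, Real.sqrt_eq_zero'.2 hA, ENNReal.ofReal_zero,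
      ENNReal.zero_rpow_of_pos (by norm_num)]

theorem integral_mul_le_sqrt_mul_sqrt_of_lintegral_sq_le {α : Type*} [MeasurableSpace α]
    {μ : Measure α} {f g : α → ℝ} (hf₀ : 0 ≤ f) (hg₀ : 0 ≤ g)
    (hf : AEMeasurable f μ) (hg : AEMeasurable g μ) {A B : ℝ}
    (hA : ∫⁻ x, ENNReal.ofReal (f x ^ 2) ∂μ ≤ ENNReal.ofReal A)
    (hB : ∫⁻ x, ENNReal.ofReal (g x ^ 2) ∂μ ≤ ENNReal.ofReal B) :
    ∫ x, f x * g x ∂μ ≤ √A * √B := by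
  have hsq : ∀ h : α → ℝ, 0 ≤ h →
      ∫⁻ x, ENNReal.ofReal (h x) ^ (2 : ℝ) ∂μ = ∫⁻ x, ENNReal.ofReal (h x ^ 2) ∂μ := by
    intro h hh
    simp only [ENNReal.rpow_two, ENNReal.ofReal_pow (hh _)]
  have hlin : ∫⁻ x, ENNReal.ofReal (f x * g x) ∂μ ≤ ENNReal.ofReal (√A * √B) :=
    calc ∫⁻ x, ENNReal.ofReal (f x * g x) ∂μ
        = ∫⁻ x, ENNReal.ofReal (f x) * ENNReal.ofReal (g x) ∂μ := by
          simp only [ENNReal.ofReal_mul (hf₀ _)]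
      _ ≤ (∫⁻ x, ENNReal.ofReal (f x) ^ (2 : ℝ) ∂μ) ^ (1 / 2 : ℝ)
          * (∫⁻ x, ENNReal.ofReal (g x) ^ (2 : ℝ) ∂μ) ^ (1 / 2 : ℝ) :=
          ENNReal.lintegral_mul_le_Lp_mul_Lq μ .two_two hf.ennreal_ofReal hg.ennreal_ofReal
      _ ≤ ENNReal.ofReal A ^ (2⁻¹ : ℝ) * ENNReal.ofReal B ^ (2⁻¹ : ℝ) := by
          rw [hsq f hf₀, hsq g hg₀, one_div]
          gcongr
      _ = ENNReal.ofReal (√A * √B) := by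
          rw [ENNReal.ofReal_rpow_inv_two, ENNReal.ofReal_rpow_inv_two,
            ENNReal.ofReal_mul (Real.sqrt_nonneg A)]
  rw [integral_eq_lintegral_of_nonneg_ae (.of_forall fun x => mul_nonneg (hf₀ x) (hg₀ x))
    (hf.mul hg).aestronglyMeasurable]
  exact ENNReal.toReal_le_of_le_ofReal (by positivity) hlin

theorem norm_sub_le_integral_of_hasDerivWithinAt_Ici {E : Type*} [NormedAddCommGroup E]
    [NormedSpace ℝ E] {g : ℝ → E} {φ : ℝ → ℝ} {a s t : ℝ} (hφ : ContinuousOn φ (Ici a))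
    (hg : ∀ x ∈ Ici a, ∃ d, HasDerivWithinAt g d (Ici a) x ∧ ‖d‖ ≤ φ x)
    (has : a ≤ s) (hst : s ≤ t) :
    ‖g t - g s‖ ≤ ∫ x in s..t, φ x := by
  -- `φ` is extended to a continuous function on `ℝ` so that its primitive is differentiable
  set ψ : ℝ → ℝ := fun x => φ (max x a)
  have hψ : Continuous ψ :=
    hφ.comp_continuous (continuous_id.max continuous_const) fun x => le_max_right x a
  have hψφ : ∫ x in s..t, ψ x = ∫ x in s..t, φ x := by
    refine intervalIntegral.integral_congr fun x hx => ?_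
    rw [uIcc_of_le hst] at hx
    simp only [ψ, max_eq_left (has.trans hx.1)]
  have hsub : Icc s t ⊆ Ici a := fun x hx => has.trans hx.1
  have hcont : ContinuousOn (fun x => ‖g x - g s‖) (Icc s t) := fun x hx => by
    obtain ⟨d, hd, -⟩ := hg x (hsub hx)
    exact ((hd.continuousWithinAt.mono hsub).sub continuousWithinAt_const).norm
  have hprim : ∀ x, HasDerivAt (fun x => ∫ y in s..x, ψ y) (ψ x) x := fun x =>
    (hψ.integral_hasStrictDerivAt s x).hasDerivAt
  have key := image_le_of_liminf_slope_right_le_deriv_boundary hcont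
    (B := fun x => ∫ y in s..x, ψ y) (by simp)
    (fun x _ => (hprim x).continuousAt.continuousWithinAt) (fun x _ => (hprim x).hasDerivWithinAt)
    (fun x hx r hr => by
      have hxa : a ≤ x := has.trans hx.1
      obtain ⟨d, hd, hdφ⟩ := hg x hxa
      have hd' : HasDerivWithinAt (fun y => g y - g s) d (Ici x) x :=
        (hd.mono (Ici_subset_Ici.2 hxa)).sub_const (g s)
      simpa [slope_def_module] using hd'.liminf_right_slope_norm_le
        (hdφ.trans_lt (by simpa [ψ, max_eq_left hxa] using hr)))
  simpa [hψφ] using key ⟨hst, le_rfl⟩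

theorem cauchySeq_of_eventually_dist_le_of_tendsto_zero {α β : Type*} [PseudoMetricSpace α]
    [SemilatticeSup β] [Nonempty β] {f : β → α} {b : β → ℝ} (hb : Tendsto b atTop (𝓝 0))
    (h : ∀ᶠ s in atTop, ∀ t ≥ s, dist (f t) (f s) ≤ b s) : CauchySeq f := by
  refine Metric.cauchySeq_iff'.2 fun ε hε => ?_
  obtain ⟨N, hN, hbN⟩ := (h.and (hb.eventually (gt_mem_nhds hε))).exists
  exact ⟨N, fun n hn => (hN n hn).trans_lt hbN⟩

theorem norm_le_of_forall_norm_inner_le {𝕜 E : Type*} [RCLike 𝕜] [NormedAddCommGroup E]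
    [InnerProductSpace 𝕜 E] {x : E} {K : ℝ} (hK : 0 ≤ K)
    (h : ∀ v, ‖inner 𝕜 v x‖ ≤ K * ‖v‖) : ‖x‖ ≤ K := by
  rcases (norm_nonneg x).eq_or_lt with hx | hx
  · rw [← hx]; exact hK
  · refine le_of_mul_le_mul_right ?_ hx
    calc ‖x‖ * ‖x‖ = ‖inner 𝕜 x x‖ := by rw [← inner_self_re_eq_norm, inner_self_eq_norm_mul_norm]
      _ ≤ K * ‖x‖ := h x

theorem inner_apply_neg {𝕜 E : Type*} [RCLike 𝕜] [NormedAddCommGroup E]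
    [InnerProductSpace 𝕜 E] {U : ℝ → E →L[𝕜] E} (h₀ : U 0 = 1)
    (hgrp : ∀ s t, U (s + t) = (U s).comp (U t))
    (hunit : ∀ t u v, inner 𝕜 (U t u) (U t v) = inner 𝕜 u v) (t : ℝ) (v w : E) :
    inner 𝕜 v (U (-t) w) = inner 𝕜 (U t v) w := by
  rw [← hunit t, ← ContinuousLinearMap.comp_apply, ← hgrp, add_neg_cancel, h₀,
    one_apply_eq_self]

theorem norm_sub_le_of_norm_deriv_le_sum_mul {F ι : Type*} [NormedAddCommGroup F]
    [NormedSpace ℝ F] [Fintype ι] {g : ℝ → F} {a b : ι → ℝ → ℝ} {A : ℝ}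
    (ha₀ : ∀ i t, 0 ≤ a i t) (hb₀ : ∀ i t, 0 ≤ b i t)
    (ha : ∀ i, ContinuousOn (a i) (Ici 0)) (hb : ∀ i, ContinuousOn (b i) (Ici 0))
    (hg : ∀ t ∈ Ici 0, ∃ d, HasDerivWithinAt g d (Ici 0) t ∧ ‖d‖ ≤ ∑ i, a i t * b i t)
    (ha_sq : ∀ i, ∫⁻ t in Ioi 0, ENNReal.ofReal (a i t ^ 2) ≤ ENNReal.ofReal A)
    (hb_sq : ∀ i, ∫⁻ t in Ioi 0, ENNReal.ofReal (b i t ^ 2) ≠ ∞) {s t : ℝ} (hs : 0 ≤ s)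
    (hst : s ≤ t) :
    ‖g t - g s‖ ≤ √A * ∑ i, √(∫⁻ τ in Ioi s, ENNReal.ofReal (b i τ ^ 2)).toReal := by
  have hIoc : Ioc s t ⊆ Ioi 0 := fun x hx => hs.trans_lt hx.1
  have hab : ∀ i, ContinuousOn (fun τ => a i τ * b i τ) (Ici 0) := fun i => (ha i).mul (hb i)
  have hterm : ∀ i, ∫ τ in s..t, a i τ * b i τ
      ≤ √A * √(∫⁻ τ in Ioi s, ENNReal.ofReal (b i τ ^ 2)).toReal := by
    intro i
    have haemeas : ∀ c : ℝ → ℝ, ContinuousOn c (Ici 0) →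
        AEMeasurable c (volume.restrict (Ioc s t)) := fun c hc =>
      (hc.mono (hIoc.trans Ioi_subset_Ici_self)).aemeasurable measurableSet_Ioc
    rw [intervalIntegral.integral_of_le hst]
    refine integral_mul_le_sqrt_mul_sqrt_of_lintegral_sq_le (ha₀ i) (hb₀ i) (haemeas _ (ha i))
      (haemeas _ (hb i)) ((lintegral_mono_set hIoc).trans (ha_sq i)) ?_
    rw [ENNReal.ofReal_toReal (ne_top_of_le_ne_top (hb_sq i) (lintegral_mono_set
      (Ioi_subset_Ioi hs)))]
    exact lintegral_mono_set Ioc_subset_Ioi_self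
  calc ‖g t - g s‖ ≤ ∫ τ in s..t, ∑ i, a i τ * b i τ :=
        norm_sub_le_integral_of_hasDerivWithinAt_Ici (continuousOn_finsetSum _ fun i _ => hab i)
          hg hs hst
    _ = ∑ i, ∫ τ in s..t, a i τ * b i τ := intervalIntegral.integral_finsetSum fun i _ =>
        ((hab i).mono fun x hx => hs.trans (uIcc_of_le hst ▸ hx).1).intervalIntegrable
    _ ≤ √A * ∑ i, √(∫⁻ τ in Ioi s, ENNReal.ofReal (b i τ ^ 2)).toReal := by
        rw [Finset.mul_sum]
        exact Finset.sum_le_sum fun i _ => hterm i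

theorem exists_tendsto_of_norm_deriv_inner_le_sum_mul {𝕜 E ι : Type*} [RCLike 𝕜]
    [NormedAddCommGroup E] [InnerProductSpace 𝕜 E] [CompleteSpace E] [Fintype ι] {f : ℝ → E}
    {a : ι → E → ℝ → ℝ} {b : ι → ℝ → ℝ} {C : ℝ}
    (ha₀ : ∀ i v t, 0 ≤ a i v t) (hb₀ : ∀ i t, 0 ≤ b i t)
    (ha : ∀ i v, ContinuousOn (a i v) (Ici 0)) (hb : ∀ i, ContinuousOn (b i) (Ici 0))
    (hf : ∀ v, ∀ t ∈ Ici 0, ∃ d : 𝕜, HasDerivWithinAt (fun s => inner 𝕜 v (f s)) d (Ici 0) t ∧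
      ‖d‖ ≤ ∑ i, a i v t * b i t)
    (ha_sq : ∀ i v, ∫⁻ t in Ioi 0, ENNReal.ofReal (a i v t ^ 2) ≤ ENNReal.ofReal (C * ‖v‖ ^ 2))
    (hb_sq : ∀ i, ∫⁻ t in Ioi 0, ENNReal.ofReal (b i t ^ 2) ≠ ∞) :
    ∃ w, Tendsto f atTop (𝓝 w) := by
  set R : ℝ → ℝ := fun s => √C * ∑ i, √(∫⁻ τ in Ioi s, ENNReal.ofReal (b i τ ^ 2)).toReal
  have hR : Tendsto R atTop (𝓝 0) := by
    have htail : ∀ i, Tendsto (fun s => √(∫⁻ τ in Ioi s, ENNReal.ofReal (b i τ ^ 2)).toReal)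
        atTop (𝓝 0) := fun i => by
      simpa using ((ENNReal.tendsto_toReal ENNReal.zero_ne_top).comp
        (tendsto_setLIntegral_Ioi_atTop_zero (hb_sq i))).sqrt
    simpa using (tendsto_finsetSum Finset.univ fun i _ => htail i).const_mul √C
  have hdist : ∀ᶠ s in atTop, ∀ t ≥ s, dist (f t) (f s) ≤ R s := by
    filter_upwards [eventually_ge_atTop 0] with s hs t hst
    rw [dist_eq_norm]
    refine norm_le_of_forall_norm_inner_le (𝕜 := 𝕜) (by positivity) fun v => ?_
    have hpair := norm_sub_le_of_norm_deriv_le_sum_mul (ha₀ · v) hb₀ (ha · v) hb (hf v)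
      (ha_sq · v) hb_sq hs hst
    rwa [Real.sqrt_mul' _ (sq_nonneg _), Real.sqrt_sq (norm_nonneg v), mul_right_comm,
      ← inner_sub_right] at hpair
  exact cauchySeq_tendsto_of_complete (cauchySeq_of_eventually_dist_le_of_tendsto_zero hR hdist)

theorem cook_argument_hilbert_target_general
    {H : Type*} [NormedAddCommGroup H] [InnerProductSpace ℂ H] [CompleteSpace H]
    (U0 U1 : ℝ → H →L[ℂ] H)
    -- U0 : strongly continuous unitary group
    (hU00 : U0 0 = 1) (hU0grp : ∀ s t : ℝ, U0 (s + t) = (U0 s).comp (U0 t))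
    (hU0cont : ∀ u : H, Continuous fun t : ℝ => U0 t u)
    (hU0unitary : ∀ (t : ℝ) (u v : H), ⟪U0 t u, U0 t v⟫ = ⟪u, v⟫)
    -- U1 : strongly continuous group of bounded (invertible) operators
    (hU1cont : ∀ u : H, Continuous fun t : ℝ => U1 t u)
    (P0 P1 : H →L[ℂ] H)
    (M : ℝ → H →L[ℂ] H)
    (N : ℕ) (B0 B1 : Fin N → ℝ → H →L[ℂ] H)
    (hB0cont : ∀ (i : Fin N) (u : H), ContinuousOn (fun t : ℝ => B0 i t u) (Ici 0))
    (hB1cont : ∀ (i : Fin N) (u : H), ContinuousOn (fun t : ℝ => B1 i t u) (Ici 0))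
    -- (a) differentiability and bound on the derivative
    (ha : ∀ u v : H, ∀ t ∈ Ici (0:ℝ), ∃ d : ℂ,
      HasDerivWithinAt (fun s : ℝ => ⟪U0 s v, P0 (M s (P1 (U1 s u)))⟫) d (Ici 0) t ∧
      ‖d‖ ≤ ∑ i : Fin N, ‖B0 i t (P0 (U0 t v))‖ * ‖B1 i t (P1 (U1 t u))‖)
    -- (b) integral propagation estimates
    (Cc : ℝ)
    (hb0 : ∀ (v : H) (i : Fin N),
      ∫⁻ t in Ioi (0:ℝ), ENNReal.ofReal (‖B0 i t (P0 (U0 t v))‖ ^ 2)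
        ≤ ENNReal.ofReal (Cc * ‖v‖ ^ 2))
    (hb1 : ∀ (u : H) (i : Fin N),
      ∫⁻ t in Ioi (0:ℝ), ENNReal.ofReal (‖B1 i t (P1 (U1 t u))‖ ^ 2)
        ≤ ENNReal.ofReal (Cc * ‖u‖ ^ 2)) :
    ∀ u : H, ∃ w : H,
      Tendsto (fun t : ℝ => U0 (-t) (P0 (M t (P1 (U1 t u))))) atTop (𝓝 w) := by
  intro u
  refine exists_tendsto_of_norm_deriv_inner_le_sum_mul (𝕜 := ℂ) (C := Cc)
    (a := fun i v t => ‖B0 i t (P0 (U0 t v))‖) (b := fun i t => ‖B1 i t (P1 (U1 t u))‖)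
    (fun _ _ _ => norm_nonneg _) (fun _ _ => norm_nonneg _)
    (fun i v => (ContinuousOn.clm_apply_Ici_of_pointwise (hB0cont i)
      (P0.continuous.comp (hU0cont v)).continuousOn).norm)
    (fun i => (ContinuousOn.clm_apply_Ici_of_pointwise (hB1cont i)
      (P1.continuous.comp (hU1cont u)).continuousOn).norm)
    (fun v t ht => ?_) (fun i v => hb0 v i)
    (fun i => ne_top_of_le_ne_top ENNReal.ofReal_ne_top (hb1 u i))
  simp_rw [inner_apply_neg hU00 hU0grp hU0unitary]
  exact ha u v t ht

/-- **Cook-type existence of strong limits, Hilbert-unitary target** (Proposition D.3(1)). -/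
theorem cook_argument_hilbert_target
    {H : Type*} [NormedAddCommGroup H] [InnerProductSpace ℂ H] [CompleteSpace H]
    (U0 U1 : ℝ → H →L[ℂ] H)
    -- U0 : strongly continuous unitary group
    (hU00 : U0 0 = 1) (hU0grp : ∀ s t : ℝ, U0 (s + t) = (U0 s).comp (U0 t))
    (hU0cont : ∀ u : H, Continuous fun t : ℝ => U0 t u)
    (hU0unitary : ∀ (t : ℝ) (u v : H), ⟪U0 t u, U0 t v⟫ = ⟪u, v⟫)
    -- U1 : strongly continuous group of bounded (invertible) operators
    (hU10 : U1 0 = 1) (hU1grp : ∀ s t : ℝ, U1 (s + t) = (U1 s).comp (U1 t))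
    (hU1cont : ∀ u : H, Continuous fun t : ℝ => U1 t u)
    (P0 P1 : H →L[ℂ] H)
    (hP0 : ∀ t : ℝ, P0.comp (U0 t) = (U0 t).comp P0)
    (hP1 : ∀ t : ℝ, P1.comp (U1 t) = (U1 t).comp P1)
    (M : ℝ → H →L[ℂ] H)
    (hMcont : ∀ u : H, ContinuousOn (fun t : ℝ => M t u) (Ici 0))
    (N : ℕ) (B0 B1 : Fin N → ℝ → H →L[ℂ] H)
    (hB0cont : ∀ (i : Fin N) (u : H), ContinuousOn (fun t : ℝ => B0 i t u) (Ici 0))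
    (hB1cont : ∀ (i : Fin N) (u : H), ContinuousOn (fun t : ℝ => B1 i t u) (Ici 0))
    -- (a) differentiability and bound on the derivative
    (ha : ∀ u v : H, ∀ t ∈ Ici (0:ℝ), ∃ d : ℂ,
      HasDerivWithinAt (fun s : ℝ => ⟪U0 s v, P0 (M s (P1 (U1 s u)))⟫) d (Ici 0) t ∧
      ‖d‖ ≤ ∑ i : Fin N, ‖B0 i t (P0 (U0 t v))‖ * ‖B1 i t (P1 (U1 t u))‖)
    -- (b) integral propagation estimates
    (Cc : ℝ) (hCc : 0 < Cc)
    (hb0 : ∀ (v : H) (i : Fin N),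
      ∫⁻ t in Ioi (0:ℝ), ENNReal.ofReal (‖B0 i t (P0 (U0 t v))‖ ^ 2)
        ≤ ENNReal.ofReal (Cc * ‖v‖ ^ 2))
    (hb1 : ∀ (u : H) (i : Fin N),
      ∫⁻ t in Ioi (0:ℝ), ENNReal.ofReal (‖B1 i t (P1 (U1 t u))‖ ^ 2)
        ≤ ENNReal.ofReal (Cc * ‖u‖ ^ 2)) :
    ∀ u : H, ∃ w : H,
      Tendsto (fun t : ℝ => U0 (-t) (P0 (M t (P1 (U1 t u))))) atTop (𝓝 w) :=
  cook_argument_hilbert_target_general U0 U1 hU00 hU0grp hU0cont hU0unitary hU1cont P0 P1 M N B0 B1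
    hB0cont hB1cont ha Cc hb0 hb1
end

section
/- Positivity, strict positivity and uniform positivity coincide on Krein subspaces (Proposition A.5). Let K1 be a Krein subspace of H. Then the following are equivalent: (i) K1 is positive, i.e. [u,u] ≥ 0 for all u ∈ K1; (ii) K1 is strictly positive, i.e. [u,u] > 0 for all u ∈ K1 with u ≠ 0; (iii) K1 is uniformly strictly positive, i.e. there exists c > 0 such that [u,u] ≥ c‖u‖² for all u ∈ K1. -/
/-!
On the Krein subspace `K1` the Krein form is represented by the compression
`A = P_{K1} M|_{K1}`: `[u, v] = ⟪u, A v⟫` for `u, v ∈ K1`. Since `M` is selfadjoint so is `A`, and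
the Riesz condition says precisely that `A` is bijective, hence invertible by the open mapping
theorem. If `K1` is positive, `A` is a positive invertible operator, so its spectrum is a compact
subset of `(0, ∞)` and `A ≥ c` for some `c > 0`, which is uniform positivity. The remaining
implications are immediate.
-/

open scoped ComplexInnerProductSpace

variable {H : Type*} [NormedAddCommGroup H] [InnerProductSpace ℂ H] [CompleteSpace H]

/-- A subspace `K1` of the Krein space `(H, [u,v] = ⟪u, M v⟫)` is a *Krein subspace* if it is
closed and the restricted form is non-degenerate in the Riesz sense: every continuous linear
functional on `K1` is represented by a unique vector of `K1` via the Krein form. -/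
def IsKreinSubspace (M : H →L[ℂ] H) (K1 : Submodule ℂ H) : Prop :=
  IsClosed (K1 : Set H) ∧
    ∀ w : K1 →L[ℂ] ℂ, ∃! u : K1, ∀ v : K1, ⟪(u : H), M (v : H)⟫ = w v

open scoped InnerProductSpace

namespace ContinuousLinearMap

theorem IsPositive.exists_pos_mul_norm_sq_le_re_inner_of_isUnit
    {E : Type*} [NormedAddCommGroup E] [InnerProductSpace ℂ E] [CompleteSpace E]
    {T : E →L[ℂ] E} (hT : T.IsPositive) (hTu : IsUnit T) :
    ∃ c : ℝ, 0 < c ∧ ∀ x, c * ‖x‖ ^ 2 ≤ (⟪x, T x⟫).re := by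
  rcases subsingleton_or_nontrivial E with _ | _
  · exact ⟨1, one_pos, fun x => by simp [Subsingleton.elim x 0]⟩
  have hstrict : IsStrictlyPositive T := hTu.isStrictlyPositive ((nonneg_iff_isPositive T).2 hT)
  obtain ⟨c, hc, hcT⟩ := (CFC.exists_pos_algebraMap_le_iff hT.isSelfAdjoint).2
    fun _ hx => hstrict.spectrum_pos hx
  refine ⟨c, hc, fun x => ?_⟩
  have := ((le_def _ _).1 hcT).re_inner_nonneg_right x
  rwa [sub_apply, inner_sub_right, map_sub, sub_nonneg, Algebra.algebraMap_eq_smul_one, smul_apply,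
    one_apply_eq_self, RCLike.real_smul_eq_coe_smul (K := ℂ), inner_smul_right,
    RCLike.re_ofReal_mul, inner_self_eq_norm_sq] at this

section Compression

variable {𝕜 E : Type*} [RCLike 𝕜] [NormedAddCommGroup E] [InnerProductSpace 𝕜 E] [CompleteSpace E]
  (T : E →L[𝕜] E) (K : Submodule 𝕜 E) [CompleteSpace K]

noncomputable def compression : K →L[𝕜] K :=
  adjoint K.subtypeL ∘L T ∘L K.subtypeL

variable {K}

theorem inner_compression_right (u v : K) :
    ⟪u, T.compression K v⟫_𝕜 = ⟪(u : E), T v⟫_𝕜 :=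
  adjoint_inner_right K.subtypeL u (T v)

variable {T}

variable (K) in
theorem _root_.IsSelfAdjoint.compression (hT : IsSelfAdjoint T) :
    IsSelfAdjoint (T.compression K) :=
  hT.adjoint_conj K.subtypeL

theorem inner_compression_left (hT : IsSelfAdjoint T) (u v : K) :
    ⟪T.compression K u, v⟫_𝕜 = ⟪(u : E), T v⟫_𝕜 :=
  ((hT.compression K).isSymmetric u v).trans (inner_compression_right T u v)

end Compression

end ContinuousLinearMap

open ContinuousLinearMap

section KreinSubspace

variable {M : H →L[ℂ] H} {K1 : Submodule ℂ H} [CompleteSpace K1]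

theorem IsKreinSubspace.isUnit_compression (hM : IsSelfAdjoint M) (hK1 : IsKreinSubspace M K1) :
    IsUnit (M.compression K1) := by
  rw [isUnit_iff_bijective]
  constructor
  · refine (injective_iff_map_eq_zero _).2 fun u hu => ?_
    obtain ⟨w, -, hw_unique⟩ := hK1.2 0
    have hu_represents_zero : ∀ v : K1, ⟪(u : H), M v⟫ = (0 : K1 →L[ℂ] ℂ) v := fun v => by
      rw [← inner_compression_left hM, hu, inner_zero_left, zero_apply]
    exact (hw_unique u hu_represents_zero).trans (hw_unique 0 (by simp)).symm
  · intro y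
    obtain ⟨u, hu, -⟩ := hK1.2 (innerSL ℂ y)
    exact ⟨u, ext_inner_right ℂ fun v => by rw [inner_compression_left hM, hu, innerSL_apply_apply]⟩

theorem isPositive_compression_of_re_inner_nonneg (hM : IsSelfAdjoint M)
    (hpos : ∀ u ∈ K1, 0 ≤ (⟪u, M u⟫).re) : (M.compression K1).IsPositive :=
  isPositive_def'.2 ⟨hM.compression K1, fun u => by
    rw [reApplyInnerSelf_apply, inner_compression_left hM]
    exact hpos u u.2⟩

end KreinSubspace

theorem kreinSubspace_positive_iff_strict_iff_uniform_general
    (M : H →L[ℂ] H) (hM : IsSelfAdjoint M)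
    (K1 : Submodule ℂ H) (hK1 : IsKreinSubspace M K1) :
    ((∀ u ∈ K1, 0 ≤ (⟪u, M u⟫).re) ↔ (∀ u ∈ K1, u ≠ 0 → 0 < (⟪u, M u⟫).re)) ∧
    ((∀ u ∈ K1, u ≠ 0 → 0 < (⟪u, M u⟫).re) ↔
      ∃ c : ℝ, 0 < c ∧ ∀ u ∈ K1, c * ‖u‖ ^ 2 ≤ (⟪u, M u⟫).re) := by
  have : CompleteSpace K1 := hK1.1.completeSpace_coe
  have uniform_of_positive (hpos : ∀ u ∈ K1, 0 ≤ (⟪u, M u⟫).re) :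
      ∃ c : ℝ, 0 < c ∧ ∀ u ∈ K1, c * ‖u‖ ^ 2 ≤ (⟪u, M u⟫).re := by
    obtain ⟨c, hc, hcA⟩ := (isPositive_compression_of_re_inner_nonneg hM hpos)
      |>.exists_pos_mul_norm_sq_le_re_inner_of_isUnit (hK1.isUnit_compression hM)
    exact ⟨c, hc, fun u hu => (inner_compression_right M ⟨u, hu⟩ ⟨u, hu⟩) ▸ hcA ⟨u, hu⟩⟩
  have strict_of_uniform : (∃ c : ℝ, 0 < c ∧ ∀ u ∈ K1, c * ‖u‖ ^ 2 ≤ (⟪u, M u⟫).re) →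
      ∀ u ∈ K1, u ≠ 0 → 0 < (⟪u, M u⟫).re := fun ⟨c, hc, hcM⟩ u hu hu0 =>
    (mul_pos hc (pow_pos (norm_pos_iff.2 hu0) 2)).trans_le (hcM u hu)
  have positive_of_strict : (∀ u ∈ K1, u ≠ 0 → 0 < (⟪u, M u⟫).re) →
      ∀ u ∈ K1, 0 ≤ (⟪u, M u⟫).re := fun hstrict u hu => by
    rcases eq_or_ne u 0 with rfl | hu0
    · simp
    · exact (hstrict u hu hu0).le
  exact ⟨⟨strict_of_uniform ∘ uniform_of_positive, positive_of_strict⟩,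
    ⟨uniform_of_positive ∘ positive_of_strict, strict_of_uniform⟩⟩

/-- **Positivity, strict positivity and uniform positivity coincide on Krein subspaces**
(Proposition A.5). -/
theorem kreinSubspace_positive_iff_strict_iff_uniform
    (M : H →L[ℂ] H) (hM : IsSelfAdjoint M) (hMunit : IsUnit M)
    (K1 : Submodule ℂ H) (hK1 : IsKreinSubspace M K1) :
    ((∀ u ∈ K1, 0 ≤ (⟪u, M u⟫).re) ↔ (∀ u ∈ K1, u ≠ 0 → 0 < (⟪u, M u⟫).re)) ∧
    ((∀ u ∈ K1, u ≠ 0 → 0 < (⟪u, M u⟫).re) ↔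
      ∃ c : ℝ, 0 < c ∧ ∀ u ∈ K1, c * ‖u‖ ^ 2 ≤ (⟪u, M u⟫).re) :=
  kreinSubspace_positive_iff_strict_iff_uniform_general M hM K1 hK1
end
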